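/- arXiv:1609.08672 — 10 statements merged into one kernel-verified Lean document; each statement's English description precedes it below -/
import Mathlib

section
/- There are no finite constants c₂ ≥ 0, κ > 0 and ε₀ > 0 with the following property: for every ε ∈ (0, ε₀), every filtered probability space, and every pair f, g of discrete-time real-valued martingales such that g is differentially subordinate to f, both are L²-bounded, f_n → F and g_n → G almost surely, and ‖g‖_2 ≥ (1−ε)·‖f‖_2, one has ‖ |G| − |F| ‖_{L²(Ω)} ≤ c₂ · ε^κ · ‖f‖_2. -/
open MeasureTheory Filter Topology
open scoped ENNReal

/-!
Even with `‖g‖₂ = ‖f‖₂` exactly, `|G|` need not be close to `|F|`. Start both martingales at `1`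
and toss one fair coin: `f` stakes everything on heads and `g` on tails, so `F ∈ {0, 2}` and
`G = 2 - F`. The increments are `±1` for both, the two bets have the same law, yet
`|G| - |F| = ±2` everywhere, while `c₂ ε ^ κ ‖f‖₂ → 0` as `ε → 0`.
-/

lemma exists_ofReal_mul_rpow_mul_lt (c : ℝ) {κ ε₀ : ℝ} (hκ : 0 < κ) (hε₀ : 0 < ε₀)
    {A B : ℝ≥0∞} (hA : 0 < A) (hB : B ≠ ⊤) :
    ∃ ε, 0 < ε ∧ ε < ε₀ ∧ ENNReal.ofReal (c * ε ^ κ) * B < A := by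
  have hlim : Tendsto (fun ε : ℝ => ENNReal.ofReal (c * ε ^ κ) * B) (𝓝[>] 0) (𝓝 0) := by
    have := ((Real.continuousAt_rpow_const 0 κ (Or.inr hκ.le)).const_mul c).tendsto
    rw [Real.zero_rpow hκ.ne', mul_zero] at this
    simpa using ENNReal.Tendsto.mul_const
      (ENNReal.tendsto_ofReal (this.mono_left nhdsWithin_le_nhds)) (Or.inr hB)
  obtain ⟨ε, hlt, hε⟩ := ((hlim.eventually (gt_mem_nhds hA)).and (Ioo_mem_nhdsGT hε₀)).exists
  exact ⟨ε, hε.1, hε.2, hlt⟩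

namespace MeasureTheory

variable {Ω E : Type*} {m0 : MeasurableSpace Ω}

def Filtration.botThenTop (m : MeasurableSpace Ω) : Filtration ℕ m where
  seq n := if n = 0 then ⊥ else m
  mono' i j hij := by
    dsimp only
    split_ifs <;> first | exact bot_le | exact le_rfl | omega
  le' n := by
    split_ifs
    exacts [bot_le, le_rfl]

def oneStep (c : E) (X : Ω → E) : ℕ → Ω → E :=
  fun n => if n = 0 then fun _ => c else X

section
variable (c : E) (X : Ω → E)

@[simp] lemma oneStep_zero : oneStep c X 0 = fun _ => c := rfl

@[simp] lemma oneStep_succ (n : ℕ) : oneStep c X (n + 1) = X := rfl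

lemma tendsto_oneStep [TopologicalSpace E] (ω : Ω) :
    Tendsto (fun n => oneStep c X n ω) atTop (𝓝 (X ω)) :=
  tendsto_atTop_of_eventually_const (i₀ := 1) fun n hn => by
    obtain ⟨k, rfl⟩ := Nat.exists_eq_add_of_le' hn
    rfl

end

variable [NormedAddCommGroup E]

lemma iSup_eLpNorm_oneStep (c : E) (X : Ω → E) (p : ℝ≥0∞) (μ : Measure Ω) :
    ⨆ n, eLpNorm (oneStep c X n) p μ = eLpNorm (fun _ => c) p μ ⊔ eLpNorm X p μ := by
  simp [← sup_iSup_nat_succ]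

lemma norm_oneStep_succ_sub_le {c c' : E} {X Y : Ω → E} (h : ∀ ω, ‖Y ω - c'‖ ≤ ‖X ω - c‖)
    (n : ℕ) (ω : Ω) :
    ‖oneStep c' Y (n + 1) ω - oneStep c' Y n ω‖ ≤
      ‖oneStep c X (n + 1) ω - oneStep c X n ω‖ := by
  rcases n with _ | n
  · exact h ω
  · simp

variable [NormedSpace ℝ E] [CompleteSpace E]

lemma martingale_oneStep {μ : Measure Ω} [IsProbabilityMeasure μ] {c : E} {X : Ω → E}
    (hX : StronglyMeasurable X) (hXi : Integrable X μ) (hc : ∫ ω, X ω ∂μ = c) :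
    Martingale (oneStep c X) (Filtration.botThenTop m0) μ := by
  refine martingale_nat (fun n => ?_) (fun n => ?_) fun n => ?_
  · cases n
    exacts [stronglyMeasurable_const, hX]
  · cases n
    exacts [integrable_const _, hXi]
  · rcases n with _ | n
    · exact (hc ▸ condExp_bot X).symm.eventuallyEq
    · exact (condExp_of_stronglyMeasurable le_rfl hX hXi).symm.eventuallyEq

end MeasureTheory

noncomputable def fairCoin : Measure Bool := (PMF.uniformOfFintype Bool).toMeasure

instance : IsProbabilityMeasure fairCoin := by
  unfold fairCoin; infer_instance

lemma integral_fairCoin (h : Bool → ℝ) : ∫ b, h b ∂fairCoin = (h true + h false) / 2 := by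
  rw [integral_fintype Integrable.of_finite]
  simp [fairCoin, measureReal_def]
  ring

lemma measurePreserving_not_fairCoin : MeasurePreserving not fairCoin fairCoin := by
  refine ⟨measurable_of_countable _, Measure.ext_of_singleton fun b => ?_⟩
  rw [Measure.map_apply (measurable_of_countable _) (measurableSet_singleton b)]
  cases b <;> simp [fairCoin]

def doubleOrNothing (b : Bool) : ℝ := if b then 2 else 0

lemma abs_doubleOrNothing_sub_one (b : Bool) : |doubleOrNothing b - 1| = 1 := by
  cases b <;> norm_num [doubleOrNothing]

lemma eLpNorm_abs_doubleOrNothing_not_sub_abs {p : ℝ≥0∞} (hp : p ≠ 0) :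
    eLpNorm (fun b => |doubleOrNothing (!b)| - |doubleOrNothing b|) p fairCoin = 2 := by
  rw [eLpNorm_congr_norm_ae (g := fun _ => (2 : ℝ)) (ae_of_all _ fun b => by
      cases b <;> norm_num [doubleOrNothing]),
    eLpNorm_const _ hp (NeZero.ne _), measure_univ, ENNReal.one_rpow, mul_one]
  simp [Real.enorm_eq_ofReal_abs]

noncomputable def betOnHeads : ℕ → Bool → ℝ := oneStep 1 doubleOrNothing

noncomputable def betOnTails : ℕ → Bool → ℝ := oneStep 1 (doubleOrNothing ∘ not)

lemma martingale_betOnHeads : Martingale betOnHeads (Filtration.botThenTop _) fairCoin :=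
  martingale_oneStep .of_discrete .of_finite
    (by norm_num [integral_fairCoin, doubleOrNothing])

lemma martingale_betOnTails : Martingale betOnTails (Filtration.botThenTop _) fairCoin :=
  martingale_oneStep .of_discrete .of_finite
    (by norm_num [integral_fairCoin, doubleOrNothing])

lemma abs_betOnTails_succ_sub_le (n : ℕ) (b : Bool) :
    |betOnTails (n + 1) b - betOnTails n b| ≤ |betOnHeads (n + 1) b - betOnHeads n b| := by
  have h (b : Bool) : ‖(doubleOrNothing ∘ not) b - 1‖ ≤ ‖doubleOrNothing b - 1‖ := by
    simp only [Function.comp_apply, Real.norm_eq_abs, abs_doubleOrNothing_sub_one, le_refl]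
  exact norm_oneStep_succ_sub_le h n b

lemma iSup_eLpNorm_betOnTails (p : ℝ≥0∞) :
    ⨆ n, eLpNorm (betOnTails n) p fairCoin = ⨆ n, eLpNorm (betOnHeads n) p fairCoin := by
  rw [betOnTails, betOnHeads, iSup_eLpNorm_oneStep, iSup_eLpNorm_oneStep,
    eLpNorm_comp_measurePreserving .of_discrete measurePreserving_not_fairCoin]

lemma iSup_eLpNorm_betOnHeads_lt_top (p : ℝ≥0∞) :
    ⨆ n, eLpNorm (betOnHeads n) p fairCoin < ⊤ := by
  rw [betOnHeads, iSup_eLpNorm_oneStep]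
  exact max_lt MemLp.of_discrete.eLpNorm_lt_top MemLp.of_discrete.eLpNorm_lt_top

theorem stmt_6 :
    ¬ ∃ (c₂ κ ε₀ : ℝ), 0 ≤ c₂ ∧ 0 < κ ∧ 0 < ε₀ ∧
      ∀ (ε : ℝ), 0 < ε → ε < ε₀ →
      ∀ (Ω : Type) (m0 : MeasurableSpace Ω) (μ : Measure Ω), IsProbabilityMeasure μ →
      ∀ (ℱ : Filtration ℕ m0) (f g : ℕ → Ω → ℝ),
        Martingale f ℱ μ → Martingale g ℱ μ →
        (∀ᵐ ω ∂μ, |g 0 ω| ≤ |f 0 ω|) →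
        (∀ n : ℕ, ∀ᵐ ω ∂μ, |g (n + 1) ω - g n ω| ≤ |f (n + 1) ω - f n ω|) →
        (⨆ n, eLpNorm (f n) 2 μ) < ⊤ →
        (⨆ n, eLpNorm (g n) 2 μ) < ⊤ →
        ∀ (F G : Ω → ℝ),
          (∀ᵐ ω ∂μ, Tendsto (fun n => f n ω) atTop (nhds (F ω))) →
          (∀ᵐ ω ∂μ, Tendsto (fun n => g n ω) atTop (nhds (G ω))) →
          ENNReal.ofReal (1 - ε) * (⨆ n, eLpNorm (f n) 2 μ) ≤
            (⨆ n, eLpNorm (g n) 2 μ) →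
          eLpNorm (fun ω => |G ω| - |F ω|) 2 μ ≤
            ENNReal.ofReal (c₂ * ε ^ κ) * ⨆ n, eLpNorm (f n) 2 μ := by
  rintro ⟨c₂, κ, ε₀, -, hκ, hε₀, H⟩
  have hA := eLpNorm_abs_doubleOrNothing_not_sub_abs two_ne_zero
  obtain ⟨ε, hε, hεε₀, hlt⟩ := exists_ofReal_mul_rpow_mul_lt c₂ hκ hε₀
    (hA.symm ▸ two_pos) (iSup_eLpNorm_betOnHeads_lt_top 2).ne
  refine hlt.not_ge (H ε hε hεε₀ Bool _ fairCoin inferInstance _ betOnHeads betOnTails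
    martingale_betOnHeads martingale_betOnTails (ae_of_all _ fun _ => le_rfl)
    (fun n => ae_of_all _ (abs_betOnTails_succ_sub_le n)) (iSup_eLpNorm_betOnHeads_lt_top 2)
    (iSup_eLpNorm_betOnTails 2 ▸ iSup_eLpNorm_betOnHeads_lt_top 2) _ _
    (ae_of_all _ (tendsto_oneStep _ _)) (ae_of_all _ (tendsto_oneStep _ _)) ?_)
  rw [iSup_eLpNorm_betOnTails]
  exact mul_le_of_le_one_left' (ENNReal.ofReal_le_one.2 (by linarith))
end

section
/- For every real p with 1 < p ≤ 2, one has p^{2−p}·(p−1)^{p−1}·(2−p)/2 ≥ 1 − p·(1 − 1/p)^{p−1}. -/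
/-!
Put `A = p ^ (2 - p) * (p - 1) ^ (p - 1)`, which equals `p * (1 - 1 / p) ^ (p - 1)`; the claim becomes
`A * (4 - p) ≥ 2`. Bound `log A = (2 - p) * log p + (p - 1) * log (p - 1)` from below by
`log p ≥ 1 - 1 / p` and the third-order Taylor bound `x log x ≥ (x - 1) + (1 - x)² / 2 + (1 - x)³ / 6`
on `(0, 1]`, then use `A ≥ 1 + log A`. What remains is the rational inequality
`(2 - p)³ (p - 1) (6 - p) / (6 p) ≥ 0`.
-/

open Real Set

lemma log_le_sub_one_sub_sq_div_two {x : ℝ} (hx0 : 0 < x) (hx1 : x ≤ 1) :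
    log x ≤ x - 1 - (1 - x) ^ 2 / 2 := by
  have hsum := hasSum_pow_div_log_of_abs_lt_one (x := 1 - x)
    (by rw [abs_lt]; constructor <;> linarith)
  have := sum_le_hasSum (Finset.range 2) (fun n _ => by positivity) hsum
  norm_num [Finset.sum_range_succ] at this
  linarith

lemma hasDerivAt_mul_log_sub_cubic {y : ℝ} (hy : 0 < y) :
    HasDerivAt (fun y => y * log y - (y - 1) - (1 - y) ^ 2 / 2 - (1 - y) ^ 3 / 6)
      (log y + (1 - y) + (1 - y) ^ 2 / 2) y := by
  have h1 : HasDerivAt (fun y : ℝ => 1 - y) (-1) y := by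
    simpa using (hasDerivAt_id y).const_sub 1
  refine ((((hasDerivAt_mul_log hy.ne').fun_sub ((hasDerivAt_id' y).sub_const 1)).fun_sub
    ((h1.fun_pow 2).div_const 2)).fun_sub ((h1.fun_pow 3).div_const 6)).congr_deriv ?_
  norm_num
  ring

lemma sub_one_add_sq_add_cube_le_mul_log {x : ℝ} (hx0 : 0 < x) (hx1 : x ≤ 1) :
    (x - 1) + (1 - x) ^ 2 / 2 + (1 - x) ^ 3 / 6 ≤ x * log x := by
  have hF : AntitoneOn (fun y => y * log y - (y - 1) - (1 - y) ^ 2 / 2 - (1 - y) ^ 3 / 6)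
      (Ioc 0 1) := by
    refine antitoneOn_of_hasDerivWithinAt_nonpos (convex_Ioc 0 1)
      (f' := fun y => log y + (1 - y) + (1 - y) ^ 2 / 2)
      (fun y hy => (hasDerivAt_mul_log_sub_cubic hy.1).continuousAt.continuousWithinAt)
      (fun y hy => ?_) (fun y hy => ?_)
    all_goals rw [interior_Ioc] at hy
    · exact (hasDerivAt_mul_log_sub_cubic hy.1).hasDerivWithinAt
    · linarith [log_le_sub_one_sub_sq_div_two hy.1 hy.2.le]
  have := hF ⟨hx0, hx1⟩ ⟨one_pos, le_rfl⟩ hx1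
  norm_num at this
  linarith

lemma mul_one_sub_one_div_rpow {p : ℝ} (hp : 1 ≤ p) :
    p * (1 - 1 / p) ^ (p - 1) = p ^ (2 - p) * (p - 1) ^ (p - 1) := by
  have hp0 : 0 < p := by linarith
  rw [one_sub_div hp0.ne', div_rpow (by linarith) hp0.le, show 2 - p = 1 - (p - 1) by ring,
    rpow_sub hp0 1 (p - 1), rpow_one]
  ring

lemma two_le_rpow_mul_rpow_mul {p : ℝ} (hp1 : 1 < p) (hp2 : p ≤ 2) :
    2 ≤ p ^ (2 - p) * (p - 1) ^ (p - 1) * (4 - p) := by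
  have hp0 : 0 < p := by linarith
  have hlog : (2 - p) * (1 - p⁻¹) + ((p - 2) + (2 - p) ^ 2 / 2 + (2 - p) ^ 3 / 6) ≤
      (2 - p) * log p + (p - 1) * log (p - 1) := by
    have hlog_p := mul_le_mul_of_nonneg_left (one_sub_inv_le_log_of_pos hp0)
      (by linarith : 0 ≤ 2 - p)
    have hlog_sub := sub_one_add_sq_add_cube_le_mul_log (x := p - 1) (by linarith) (by linarith)
    rw [show p - 1 - 1 = p - 2 by ring, show 1 - (p - 1) = 2 - p by ring] at hlog_sub
    linarith
  have hexp : 1 + ((2 - p) * log p + (p - 1) * log (p - 1)) ≤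
      p ^ (2 - p) * (p - 1) ^ (p - 1) := by
    rw [rpow_def_of_pos hp0, rpow_def_of_pos (by linarith), ← exp_add, mul_comm (log p),
      mul_comm (log (p - 1)), add_comm 1]
    exact add_one_le_exp _
  have hpoly : (1 + ((2 - p) * (1 - p⁻¹) + ((p - 2) + (2 - p) ^ 2 / 2 + (2 - p) ^ 3 / 6))) *
      (4 - p) - 2 = (2 - p) ^ 3 * (p - 1) * (6 - p) / (6 * p) := by
    field_simp
    ring
  have hpoly_nonneg : 0 ≤ (2 - p) ^ 3 * (p - 1) * (6 - p) / (6 * p) := by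
    have : 0 ≤ 2 - p := by linarith
    have : 0 ≤ p - 1 := by linarith
    have : 0 ≤ 6 - p := by linarith
    positivity
  have h4p : 0 ≤ 4 - p := by linarith
  linarith [mul_le_mul_of_nonneg_right ((add_le_add_right hlog 1).trans hexp) h4p]

theorem stmt_7 (p : ℝ) (hp1 : 1 < p) (hp2 : p ≤ 2) :
    p ^ (2 - p) * (p - 1) ^ (p - 1) * (2 - p) / 2 ≥ 1 - p * (1 - 1 / p) ^ (p - 1) := by
  rw [mul_one_sub_one_div_rpow hp1.le]
  linarith [two_le_rpow_mul_rpow_mul hp1 hp2]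
end

section
/- Let H be a real (separable) Hilbert space, let 1 < p < 2, and define U_p : H × H → ℝ by U_p(x,y) = p(1−1/p)^{p−1}·((p−1)‖y‖ − ‖x‖)·(‖x‖+‖y‖)^{p−1}. Then for all x, y ∈ H with (x,y) ≠ (0,0), U_p(x,y) ≥ (p−1)^p ‖y‖^p − ‖x‖^p + (1 − p(1−1/p)^{p−1}) · ((p−1)‖y‖ − ‖x‖)² / (‖x‖+‖y‖)^{2−p}. -/
/-!
With `a = ‖x‖`, `b = ‖y‖`, both sides are `p`-homogeneous in `(a, b)`, so it suffices to take
`a = 1 - r`, `b = r` with `r ∈ [0, 1]`. Then `(p - 1) b - a = p r - 1` and the difference of the two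
sides becomes `f r = c (p r - 1) + (1 - r)^p - (p - 1)^p r^p - (1 - c) (p r - 1)^2` with
`c = p (1 - 1/p)^(p - 1)`. One checks `f 0 = f (1/p) = f' (1/p) = 0`, and for `p < 2` the second
derivative `f''` is increasing on `(0, 1)`, so `f'` is convex there; these facts force `f ≥ 0`.
-/

open Set

section Calculus

variable {f f' : ℝ → ℝ} {a b : ℝ}

theorem monotoneOn_Icc_of_hasDerivAt_nonneg (hf : ∀ t ∈ Icc a b, HasDerivAt f (f' t) t)
    (hf' : ∀ t ∈ Ioo a b, 0 ≤ f' t) : MonotoneOn f (Icc a b) :=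
  monotoneOn_of_hasDerivWithinAt_nonneg (convex_Icc a b)
    (fun t ht => (hf t ht).continuousAt.continuousWithinAt)
    (fun t ht => (hf t (interior_subset ht)).hasDerivWithinAt) (by rwa [interior_Icc])

theorem antitoneOn_Icc_of_hasDerivAt_nonpos (hf : ∀ t ∈ Icc a b, HasDerivAt f (f' t) t)
    (hf' : ∀ t ∈ Ioo a b, f' t ≤ 0) : AntitoneOn f (Icc a b) :=
  antitoneOn_of_hasDerivWithinAt_nonpos (convex_Icc a b)
    (fun t ht => (hf t ht).continuousAt.continuousWithinAt)
    (fun t ht => (hf t (interior_subset ht)).hasDerivWithinAt) (by rwa [interior_Icc])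

/-- Rolle's theorem gives a second zero `ρ < c` of `f'`; the convex `f'` is then `≤ 0` on `[ρ, c]`
and `≥ 0` on the rest of `[a, b]`, so `f` increases from `f a = 0`, decreases to `f c = 0`, and
increases again. -/
theorem nonneg_of_convexOn_deriv_of_eq_zero {c : ℝ}
    (hf : ∀ t ∈ Icc a b, HasDerivAt f (f' t) t) (hf' : ConvexOn ℝ (Icc a b) f')
    (hc : c ∈ Ioc a b) (hfa : f a = 0) (hfc : f c = 0) (hf'c : f' c = 0)
    {t : ℝ} (ht : t ∈ Icc a b) : 0 ≤ f t := by
  have hcI : c ∈ Icc a b := Ioc_subset_Icc_self hc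
  obtain ⟨ρ, hρ, hf'ρ⟩ := exists_hasDerivAt_eq_zero hc.1
    (fun u hu => (hf u (Icc_subset_Icc_right hc.2 hu)).continuousAt.continuousWithinAt)
    (hfa.trans hfc.symm) fun u hu => hf u ⟨hu.1.le, hu.2.le.trans hc.2⟩
  have hρI : ρ ∈ Icc a b := ⟨hρ.1.le, hρ.2.le.trans hc.2⟩
  rcases le_total t ρ with htρ | hρt
  · have hmono : MonotoneOn f (Icc a ρ) :=
      monotoneOn_Icc_of_hasDerivAt_nonneg (fun u hu => hf u (Icc_subset_Icc_right hρI.2 hu))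
        fun u hu => hf'ρ ▸ hf'.le_left_of_right_le'' ⟨hu.1.le, hu.2.le.trans hρI.2⟩ hcI hu.2.le
          hρ.2 (hf'c.trans hf'ρ.symm).le
    exact hfa ▸ hmono ⟨le_rfl, ht.1.trans htρ⟩ ⟨ht.1, htρ⟩ ht.1
  rcases le_total t c with htc | hct
  · have hanti : AntitoneOn f (Icc ρ c) :=
      antitoneOn_Icc_of_hasDerivAt_nonpos (fun u hu => hf u (Icc_subset_Icc hρI.1 hc.2 hu))
        fun u hu => by
          simpa [hf'ρ, hf'c] using hf'.le_max_of_mem_Icc hρI hcI (Ioo_subset_Icc_self hu)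
    exact hfc ▸ hanti ⟨hρt, htc⟩ ⟨hρ.2.le, le_rfl⟩ htc
  · have hmono : MonotoneOn f (Icc c b) :=
      monotoneOn_Icc_of_hasDerivAt_nonneg (fun u hu => hf u (Icc_subset_Icc_left hc.1.le hu))
        fun u hu => hf'c ▸ hf'.le_right_of_left_le'' hρI ⟨hc.1.le.trans hu.1.le, hu.2.le⟩ hρ.2
          hu.1.le (hf'ρ.trans hf'c.symm).le
    exact hfc ▸ hmono ⟨le_rfl, hc.2⟩ ⟨hct, ht.2⟩ hct

end Calculus

namespace Up

noncomputable def const (p : ℝ) : ℝ := p * (1 - 1 / p) ^ (p - 1)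

noncomputable def defect (p r : ℝ) : ℝ :=
  const p * (p * r - 1) + (1 - r) ^ p - (p - 1) ^ p * r ^ p - (1 - const p) * (p * r - 1) ^ 2

noncomputable def defectDeriv (p r : ℝ) : ℝ :=
  const p * p - p * (1 - r) ^ (p - 1) - (p - 1) ^ p * p * r ^ (p - 1)
    - 2 * p * (1 - const p) * (p * r - 1)

noncomputable def defectDeriv2 (p r : ℝ) : ℝ :=
  p * (p - 1) * (1 - r) ^ (p - 2) - (p - 1) ^ p * p * (p - 1) * r ^ (p - 2)
    - 2 * p ^ 2 * (1 - const p)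

variable {p : ℝ}

theorem hasDerivAt_defect (hp : 1 < p) (r : ℝ) : HasDerivAt (defect p) (defectDeriv p r) r := by
  have hlin : HasDerivAt (fun s : ℝ => p * s - 1) p r := by
    simpa using ((hasDerivAt_id r).const_mul p).sub_const 1
  have hpow : HasDerivAt (fun s : ℝ => s ^ p) (p * r ^ (p - 1)) r :=
    Real.hasDerivAt_rpow_const (Or.inr hp.le)
  have hpow' : HasDerivAt (fun s : ℝ => (1 - s) ^ p) (-1 * p * (1 - r) ^ (p - 1)) r :=
    ((hasDerivAt_id r).const_sub 1).rpow_const (Or.inr hp.le)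
  refine ((((hlin.const_mul (const p)).add hpow').sub (hpow.const_mul ((p - 1) ^ p))).sub
    ((hlin.pow 2).const_mul (1 - const p))).congr_deriv ?_
  simp only [defectDeriv]
  push_cast
  ring

theorem hasDerivAt_defectDeriv {r : ℝ} (hr : r ∈ Ioo 0 1) :
    HasDerivAt (defectDeriv p) (defectDeriv2 p r) r := by
  have hlin : HasDerivAt (fun s : ℝ => p * s - 1) p r := by
    simpa using ((hasDerivAt_id r).const_mul p).sub_const 1
  have hpow : HasDerivAt (fun s : ℝ => s ^ (p - 1)) ((p - 1) * r ^ (p - 1 - 1)) r :=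
    Real.hasDerivAt_rpow_const (Or.inl hr.1.ne')
  have hpow' : HasDerivAt (fun s : ℝ => (1 - s) ^ (p - 1))
      (-1 * (p - 1) * (1 - r) ^ (p - 1 - 1)) r :=
    ((hasDerivAt_id r).const_sub 1).rpow_const (Or.inl (sub_ne_zero.mpr hr.2.ne'))
  refine ((((hasDerivAt_const r (const p * p)).sub (hpow'.const_mul p)).sub
    (hpow.const_mul ((p - 1) ^ p * p))).sub (hlin.const_mul (2 * p * (1 - const p)))).congr_deriv ?_
  simp only [defectDeriv2, show p - 1 - 1 = p - 2 by ring]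
  ring

theorem monotoneOn_defectDeriv2 (hp₁ : 1 < p) (hp₂ : p < 2) :
    MonotoneOn (defectDeriv2 p) (Ioo 0 1) := by
  intro u hu v hv huv
  have h₁ : (1 - u) ^ (p - 2) ≤ (1 - v) ^ (p - 2) :=
    Real.rpow_le_rpow_of_nonpos (by linarith [hv.2]) (by linarith) (by linarith)
  have h₂ : v ^ (p - 2) ≤ u ^ (p - 2) := Real.rpow_le_rpow_of_nonpos hu.1 huv (by linarith)
  have hc : 0 ≤ (p - 1) ^ p * p * (p - 1) := by
    have := Real.rpow_nonneg (sub_nonneg.mpr hp₁.le) p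
    positivity
  simp only [defectDeriv2]
  nlinarith [mul_le_mul_of_nonneg_left h₁ (by nlinarith : 0 ≤ p * (p - 1)),
    mul_le_mul_of_nonneg_left h₂ hc]

theorem convexOn_defectDeriv (hp₁ : 1 < p) (hp₂ : p < 2) :
    ConvexOn ℝ (Icc 0 1) (defectDeriv p) := by
  have hderiv : ∀ r ∈ Ioo (0 : ℝ) 1, HasDerivAt (defectDeriv p) (defectDeriv2 p r) r :=
    fun r hr => hasDerivAt_defectDeriv hr
  have hcont : ContinuousOn (defectDeriv p) (Icc 0 1) := by
    have hpow : Continuous fun s : ℝ => s ^ (p - 1) :=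
      continuous_id.rpow_const fun _ => Or.inr (by linarith)
    exact (by unfold defectDeriv; fun_prop : Continuous (defectDeriv p)).continuousOn
  refine MonotoneOn.convexOn_of_deriv (convex_Icc 0 1) hcont ?_ ?_ <;> rw [interior_Icc]
  · exact fun r hr => (hderiv r hr).differentiableAt.differentiableWithinAt
  · exact (monotoneOn_defectDeriv2 hp₁ hp₂).congr fun r hr => ((hderiv r hr).deriv).symm

theorem defect_zero (hp : 1 < p) : defect p 0 = 0 := by
  simp only [defect, mul_zero, sub_zero, Real.zero_rpow (by positivity : p ≠ 0), Real.one_rpow]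
  ring

theorem defect_inv (hp : 1 < p) : defect p (1 / p) = 0 := by
  have hp₀ : p ≠ 0 := by positivity
  rw [defect, one_sub_div hp₀, Real.div_rpow (by linarith) (by linarith),
    Real.div_rpow zero_le_one (by linarith), Real.one_rpow, mul_one_div_cancel hp₀]
  ring

theorem defectDeriv_inv (hp : 1 < p) : defectDeriv p (1 / p) = 0 := by
  have hp₀ : p ≠ 0 := by positivity
  have hpow : (p - 1) ^ p = (p - 1) ^ (p - 1) * (p - 1) := by
    rw [← Real.rpow_add_one (by linarith), sub_add_cancel]
  rw [defectDeriv, const, one_sub_div hp₀, Real.div_rpow (by linarith) (by linarith),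
    Real.div_rpow zero_le_one (by linarith), Real.one_rpow, hpow, mul_one_div_cancel hp₀]
  ring

theorem defect_nonneg (hp₁ : 1 < p) (hp₂ : p < 2) {r : ℝ} (hr : r ∈ Icc 0 1) :
    0 ≤ defect p r :=
  nonneg_of_convexOn_deriv_of_eq_zero (fun r _ => hasDerivAt_defect hp₁ r)
    (convexOn_defectDeriv hp₁ hp₂)
    ⟨by positivity, (div_le_one (by positivity)).mpr hp₁.le⟩
    (defect_zero hp₁) (defect_inv hp₁) (defectDeriv_inv hp₁) hr

theorem sub_eq_rpow_mul_defect {a b : ℝ} (ha : 0 ≤ a) (hb : 0 ≤ b) (hab : 0 < a + b) :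
    const p * ((p - 1) * b - a) * (a + b) ^ (p - 1) -
      ((p - 1) ^ p * b ^ p - a ^ p + (1 - const p) * ((p - 1) * b - a) ^ 2 / (a + b) ^ (2 - p)) =
    (a + b) ^ p * defect p (b / (a + b)) := by
  have hsub : 1 - b / (a + b) = a / (a + b) := by field_simp; ring
  rw [defect, hsub, Real.div_rpow ha hab.le, Real.div_rpow hb hab.le,
    Real.rpow_sub hab, Real.rpow_sub hab, Real.rpow_one, Real.rpow_two]
  field_simp
  ring

end Up

theorem stmt_8_general {H : Type*} [NormedAddCommGroup H]
    (p : ℝ) (hp1 : 1 < p) (hp2 : p < 2)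
    (x y : H) (hxy : (x, y) ≠ (0, 0)) :
    p * (1 - 1 / p) ^ (p - 1) * ((p - 1) * ‖y‖ - ‖x‖) * (‖x‖ + ‖y‖) ^ (p - 1) ≥
      (p - 1) ^ p * ‖y‖ ^ p - ‖x‖ ^ p +
        (1 - p * (1 - 1 / p) ^ (p - 1)) * ((p - 1) * ‖y‖ - ‖x‖) ^ 2 /
          (‖x‖ + ‖y‖) ^ (2 - p) := by
  have hs : 0 < ‖x‖ + ‖y‖ :=
    (norm_pos_iff.mpr hxy).trans_le (max_le_add_of_nonneg (norm_nonneg x) (norm_nonneg y))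
  have hr : ‖y‖ / (‖x‖ + ‖y‖) ∈ Icc 0 1 :=
    ⟨by positivity, (div_le_one hs).mpr (le_add_of_nonneg_left (norm_nonneg x))⟩
  have key := mul_nonneg (Real.rpow_nonneg hs.le p) (Up.defect_nonneg hp1 hp2 hr)
  rw [← Up.sub_eq_rpow_mul_defect (norm_nonneg x) (norm_nonneg y) hs] at key
  exact sub_nonneg.mp key

theorem stmt_8 {H : Type*} [NormedAddCommGroup H] [InnerProductSpace ℝ H]
    [SecondCountableTopology H]
    (p : ℝ) (hp1 : 1 < p) (hp2 : p < 2)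
    (x y : H) (hxy : (x, y) ≠ (0, 0)) :
    p * (1 - 1 / p) ^ (p - 1) * ((p - 1) * ‖y‖ - ‖x‖) * (‖x‖ + ‖y‖) ^ (p - 1) ≥
      (p - 1) ^ p * ‖y‖ ^ p - ‖x‖ ^ p +
        (1 - p * (1 - 1 / p) ^ (p - 1)) * ((p - 1) * ‖y‖ - ‖x‖) ^ 2 /
          (‖x‖ + ‖y‖) ^ (2 - p) :=
  stmt_8_general p hp1 hp2 x y hxy
end

section
/- Let H be a real (separable) Hilbert space, let 1 < p < 2, and define U_p : H × H → ℝ by U_p(x,y) = p(1−1/p)^{p−1}·((p−1)‖y‖ − ‖x‖)·(‖x‖+‖y‖)^{p−1}. Then for every fixed x ∈ H, the function y ↦ U_p(x,y) is convex on H. -/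
/-!
With `a = ‖x‖`, the function is a nonnegative multiple of `y ↦ g ‖y‖`, where
`g t = ((p - 1) t - a) (a + t)^(p - 1)`. On `t ≥ 0` one has
`g' t = p (p - 1) t (a + t)^(p - 2) ≥ 0` and
`g'' t = p (p - 1) (a + (p - 1) t) (a + t)^(p - 3) ≥ 0`, so `g` is convex and nondecreasing there,
and a convex nondecreasing function of the (convex) norm is convex.
-/

open Set

theorem ConvexOn.comp_norm {E : Type*} [SeminormedAddCommGroup E] [NormedSpace ℝ E]
    {s : Set E} (hs : Convex ℝ s) {g : ℝ → ℝ} (hg : ConvexOn ℝ (Ici 0) g)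
    (hg' : MonotoneOn g (Ici 0)) : ConvexOn ℝ s (fun y => g ‖y‖) := by
  have himage : norm '' s ⊆ Ici 0 := image_subset_iff.2 fun y _ => norm_nonneg y
  have himage_convex : Convex ℝ (norm '' s) :=
    Real.convex_iff_isPreconnected.2 (hs.isPreconnected.image _ continuous_norm.continuousOn)
  exact (hg.subset himage himage_convex).comp (convexOn_norm hs) (hg'.mono himage)

noncomputable def radialProfile (p a t : ℝ) : ℝ := ((p - 1) * t - a) * (a + t) ^ (p - 1)

section radialProfile

variable {p a : ℝ}

theorem continuous_radialProfile (hp : 1 ≤ p) : Continuous (radialProfile p a) := by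
  unfold radialProfile
  have hrpow := Real.continuous_rpow_const (q := p - 1) (by linarith)
  fun_prop

theorem hasDerivAt_radialProfile {t : ℝ} (hat : 0 < a + t) :
    HasDerivAt (radialProfile p a) (p * (p - 1) * t * (a + t) ^ (p - 2)) t := by
  have hlin : HasDerivAt (fun t : ℝ => (p - 1) * t - a) (p - 1) t := by
    simpa using ((hasDerivAt_id t).const_mul (p - 1)).sub_const a
  have hpow : HasDerivAt (fun t : ℝ => (a + t) ^ (p - 1)) ((p - 1) * (a + t) ^ (p - 2)) t := by
    simpa [show p - 1 - 1 = p - 2 by ring] using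
      ((hasDerivAt_id t).const_add a).rpow_const (p := p - 1) (Or.inl hat.ne')
  have hsplit : (a + t) ^ (p - 1) = (a + t) * (a + t) ^ (p - 2) := by
    rw [show p - 1 = 1 + (p - 2) by ring, Real.rpow_add hat, Real.rpow_one]
  exact (hlin.mul hpow).congr_deriv (by rw [hsplit]; ring)

theorem hasDerivAt_deriv_radialProfile {t : ℝ} (hat : 0 < a + t) :
    HasDerivAt (fun t => p * (p - 1) * t * (a + t) ^ (p - 2))
      (p * (p - 1) * (a + (p - 1) * t) * (a + t) ^ (p - 3)) t := by
  have hpow : HasDerivAt (fun t : ℝ => (a + t) ^ (p - 2)) ((p - 2) * (a + t) ^ (p - 3)) t := by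
    simpa [show p - 2 - 1 = p - 3 by ring] using
      ((hasDerivAt_id t).const_add a).rpow_const (p := p - 2) (Or.inl hat.ne')
  have hsplit : (a + t) ^ (p - 2) = (a + t) * (a + t) ^ (p - 3) := by
    rw [show p - 2 = 1 + (p - 3) by ring, Real.rpow_add hat, Real.rpow_one]
  exact (((hasDerivAt_id t).const_mul (p * (p - 1))).mul hpow).congr_deriv
    (by rw [hsplit]; simp only [id]; ring)

variable (hp : 1 ≤ p) (ha : 0 ≤ a)
include hp ha

theorem monotoneOn_radialProfile : MonotoneOn (radialProfile p a) (Ici 0) := by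
  refine monotoneOn_of_hasDerivWithinAt_nonneg (convex_Ici 0)
    (f' := fun t => p * (p - 1) * t * (a + t) ^ (p - 2))
    (continuous_radialProfile hp).continuousOn (fun t ht => ?_) (fun t ht => ?_) <;>
    rw [interior_Ici, mem_Ioi] at ht
  · exact (hasDerivAt_radialProfile (by linarith)).hasDerivWithinAt
  · have : 0 ≤ (a + t) ^ (p - 2) := Real.rpow_nonneg (by linarith) _
    have : 0 ≤ p * (p - 1) := by nlinarith
    positivity

theorem convexOn_radialProfile : ConvexOn ℝ (Ici 0) (radialProfile p a) := by
  refine convexOn_of_hasDerivWithinAt2_nonneg (convex_Ici 0)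
    (f' := fun t => p * (p - 1) * t * (a + t) ^ (p - 2))
    (f'' := fun t => p * (p - 1) * (a + (p - 1) * t) * (a + t) ^ (p - 3))
    (continuous_radialProfile hp).continuousOn (fun t ht => ?_) (fun t ht => ?_)
    (fun t ht => ?_) <;> rw [interior_Ici, mem_Ioi] at ht
  · exact (hasDerivAt_radialProfile (by linarith)).hasDerivWithinAt
  · exact (hasDerivAt_deriv_radialProfile (by linarith)).hasDerivWithinAt
  · have : 0 ≤ (a + t) ^ (p - 3) := Real.rpow_nonneg (by linarith) _
    have : 0 ≤ p * (p - 1) := by nlinarith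
    have : 0 ≤ a + (p - 1) * t := by nlinarith
    positivity

end radialProfile

theorem stmt_9_general {H : Type*} [NormedAddCommGroup H] [InnerProductSpace ℝ H]
    (p : ℝ) (hp1 : 1 < p) (x : H) :
    ConvexOn ℝ Set.univ (fun y : H =>
      p * (1 - 1 / p) ^ (p - 1) * ((p - 1) * ‖y‖ - ‖x‖) * (‖x‖ + ‖y‖) ^ (p - 1)) := by
  have hconst : 0 ≤ p * (1 - 1 / p) ^ (p - 1) := by
    have : 0 ≤ 1 - 1 / p := by rw [sub_nonneg, div_le_one (by linarith)]; exact hp1.le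
    have := Real.rpow_nonneg this (p - 1)
    positivity
  have hprofile := ConvexOn.comp_norm (E := H) convex_univ
    (convexOn_radialProfile hp1.le (norm_nonneg x)) (monotoneOn_radialProfile hp1.le (norm_nonneg x))
  refine (hprofile.smul hconst).congr fun y _ => ?_
  simp only [radialProfile, smul_eq_mul]
  ring

theorem stmt_9 {H : Type*} [NormedAddCommGroup H] [InnerProductSpace ℝ H]
    [SecondCountableTopology H]
    (p : ℝ) (hp1 : 1 < p) (hp2 : p < 2) (x : H) :
    ConvexOn ℝ Set.univ (fun y : H =>
      p * (1 - 1 / p) ^ (p - 1) * ((p - 1) * ‖y‖ - ‖x‖) * (‖x‖ + ‖y‖) ^ (p - 1)) :=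
  stmt_9_general p hp1 x
end

section
/- For every real p ≥ 2 the following five inequalities hold: (1) (1 − 1/p)^{p−1} ≥ 2/(p+2); (2) p·(1 − 1/p)^{p−1} ≥ 1 + ((p−2)/(p−1))·(1/2 − 1/e); (3) (1 − 1/p)^{p−1} ≤ 1/2; (4) (1 − 1/(p−1))^{p−1} ≤ 1/e; (5) 1 − (1 − 1/p)^{p−2} ≥ (p−2)/(2(p−1)). -/
/-! With `t = p - 1 ≥ 1` we have `1 - 1/p = (1 + 1/t)⁻¹`, so (1), (3) and (5) follow from
`2 ≤ (1 + 1/t)^t ≤ (t + 3)/2`. The lower bound is Bernoulli's inequality. The upper bound is an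
equality at `t = 1`, and `log (t + 3) - t log (1 + 1/t)` is nondecreasing because
`log y ≤ (y - y⁻¹)/2` for `y ≥ 1` (that is, `x ≤ sinh x`). (4) is `1 - x ≤ exp (-x)` raised to the
power `p - 1`, and (2) follows from (1) because `1/2 - 1/e ≤ 1/4`. -/

open Real Set

lemma log_le_half_sub_inv {y : ℝ} (hy : 1 ≤ y) : log y ≤ (y - y⁻¹) / 2 := by
  rw [← sinh_log (by linarith)]
  exact self_le_sinh_iff.mpr (log_nonneg hy)

lemma two_le_one_add_inv_rpow {t : ℝ} (ht : 1 ≤ t) : 2 ≤ (1 + t⁻¹) ^ t := by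
  have ht' : 0 < t⁻¹ := inv_pos.2 (zero_lt_one.trans_le ht)
  have h := one_add_mul_self_le_rpow_one_add (s := t⁻¹) (by linarith) ht
  rwa [mul_inv_cancel₀ (by positivity), one_add_one_eq_two] at h

lemma hasDerivAt_log_add_three_sub_mul_log_sub_log {t : ℝ} (ht : 0 < t) :
    HasDerivAt (fun t => log (t + 3) - t * (log (t + 1) - log t))
      ((t + 3)⁻¹ + (t + 1)⁻¹ - (log (t + 1) - log t)) t := by
  have h3 := ((hasDerivAt_id' t).add_const 3).log (by linarith)
  have h1 := ((hasDerivAt_id' t).add_const 1).log (by linarith)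
  have h0 := (hasDerivAt_id' t).log ht.ne'
  refine (h3.sub ((hasDerivAt_id' t).mul (h1.sub h0))).congr_deriv ?_
  simp only [Pi.sub_apply]
  field_simp
  ring

lemma log_add_one_sub_log_le {t : ℝ} (ht : 1 ≤ t) :
    log (t + 1) - log t ≤ (t + 3)⁻¹ + (t + 1)⁻¹ := by
  have ht0 : 0 < t := by linarith
  calc log (t + 1) - log t = log ((t + 1) / t) := (log_div (by linarith) ht0.ne').symm
    _ ≤ ((t + 1) / t - ((t + 1) / t)⁻¹) / 2 :=
        log_le_half_sub_inv ((one_le_div ht0).2 (by linarith))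
    _ ≤ (t + 3)⁻¹ + (t + 1)⁻¹ := by
        field_simp
        nlinarith

lemma monotoneOn_log_add_three_sub_mul_log_sub_log :
    MonotoneOn (fun t => log (t + 3) - t * (log (t + 1) - log t)) (Ici 1) := by
  have hderiv {s : ℝ} (hs : 1 ≤ s) :=
    hasDerivAt_log_add_three_sub_mul_log_sub_log (zero_lt_one.trans_le hs)
  refine monotoneOn_of_hasDerivWithinAt_nonneg (convex_Ici 1)
    (f' := fun s => (s + 3)⁻¹ + (s + 1)⁻¹ - (log (s + 1) - log s))
    (fun s hs => (hderiv hs).continuousAt.continuousWithinAt) ?_ ?_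
  · intro s hs
    rw [interior_Ici] at hs
    exact (hderiv hs.le).hasDerivWithinAt
  · intro s hs
    rw [interior_Ici] at hs
    exact sub_nonneg.2 (log_add_one_sub_log_le hs.le)

lemma mul_log_add_one_sub_log_le {t : ℝ} (ht : 1 ≤ t) :
    t * (log (t + 1) - log t) ≤ log ((t + 3) / 2) := by
  have h := monotoneOn_log_add_three_sub_mul_log_sub_log self_mem_Ici ht ht
  have h1 : log (1 + 3) - 1 * (log (1 + 1) - log 1) = log 2 := by
    rw [show (1 : ℝ) + 3 = 2 ^ 2 by norm_num, log_pow]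
    norm_num
    ring
  simp only [h1] at h
  rw [log_div (by linarith) two_ne_zero]
  linarith

lemma one_add_inv_rpow_le {t : ℝ} (ht : 1 ≤ t) : (1 + t⁻¹) ^ t ≤ (t + 3) / 2 := by
  have ht0 : 0 < t := by linarith
  rw [rpow_def_of_pos (by positivity), ← exp_log (by linarith : 0 < (t + 3) / 2),
    show 1 + t⁻¹ = (t + 1) / t by field_simp, log_div (by linarith) ht0.ne', mul_comm]
  exact exp_le_exp.2 (mul_log_add_one_sub_log_le ht)

lemma one_sub_div_rpow_le_exp_neg {t y : ℝ} (hy : 0 < y) (hty : t ≤ y) :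
    (1 - t / y) ^ y ≤ exp (-t) := by
  calc (1 - t / y) ^ y ≤ exp (-(t / y)) ^ y := by
        refine rpow_le_rpow ?_ ?_ hy.le
        · rwa [sub_nonneg, div_le_one hy]
        · linarith [add_one_le_exp (-(t / y))]
    _ = exp (-t) := by rw [← exp_mul, neg_mul, div_mul_cancel₀ _ hy.ne']

lemma one_sub_one_div_rpow_sub_one {p : ℝ} (hp : 1 < p) :
    (1 - 1 / p) ^ (p - 1) = ((1 + (p - 1)⁻¹) ^ (p - 1))⁻¹ := by
  have hp0 : p ≠ 0 := by linarith
  have hp1 : p - 1 ≠ 0 := by linarith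
  rw [← inv_rpow (by positivity), inv_eq_one_div (p - 1), one_add_div hp1, sub_add_cancel,
    inv_div, one_sub_div hp0]

lemma one_sub_one_div_rpow_sub_two {p : ℝ} (hp : 1 < p) :
    (1 - 1 / p) ^ (p - 2) = (1 - 1 / p) ^ (p - 1) * (p / (p - 1)) := by
  have hp0 : p ≠ 0 := by linarith
  have hb : 0 < 1 - 1 / p := by rw [sub_pos, div_lt_one (by linarith)]; exact hp
  rw [show p - 2 = p - 1 - 1 by ring, rpow_sub_one hb.ne', div_eq_mul_inv, one_sub_div hp0,
    inv_div]

lemma half_sub_inv_exp_one_le : 1 / 2 - 1 / exp 1 ≤ 1 / 4 := by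
  have : 1 / 4 ≤ 1 / exp 1 := one_div_le_one_div_of_le (exp_pos 1) (by linarith [exp_one_lt_three])
  linarith

theorem stmt_10 (p : ℝ) (hp : 2 ≤ p) :
    (1 - 1 / p) ^ (p - 1) ≥ 2 / (p + 2) ∧
    p * (1 - 1 / p) ^ (p - 1) ≥ 1 + (p - 2) / (p - 1) * (1 / 2 - 1 / Real.exp 1) ∧
    (1 - 1 / p) ^ (p - 1) ≤ 1 / 2 ∧
    (1 - 1 / (p - 1)) ^ (p - 1) ≤ 1 / Real.exp 1 ∧
    1 - (1 - 1 / p) ^ (p - 2) ≥ (p - 2) / (2 * (p - 1)) := by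
  have ht : 1 ≤ p - 1 := by linarith
  have h1 : 2 / (p + 2) ≤ (1 - 1 / p) ^ (p - 1) := by
    rw [one_sub_one_div_rpow_sub_one (by linarith), ← inv_div]
    exact inv_anti₀ (by positivity) (by linarith [one_add_inv_rpow_le ht])
  have h3 : (1 - 1 / p) ^ (p - 1) ≤ 1 / 2 := by
    rw [one_sub_one_div_rpow_sub_one (by linarith), one_div]
    exact inv_anti₀ two_pos (two_le_one_add_inv_rpow ht)
  refine ⟨h1, ?_, h3, ?_, ?_⟩
  · calc 1 + (p - 2) / (p - 1) * (1 / 2 - 1 / exp 1)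
        ≤ 1 + (p - 2) / (p - 1) * (1 / 4) := by gcongr; exact half_sub_inv_exp_one_le
      _ ≤ p * (2 / (p + 2)) := by
          field_simp
          nlinarith
      _ ≤ p * (1 - 1 / p) ^ (p - 1) := by gcongr
  · exact (one_sub_div_rpow_le_exp_neg (by linarith) ht).trans_eq (by rw [exp_neg, one_div])
  · rw [one_sub_one_div_rpow_sub_two (by linarith)]
    calc (p - 2) / (2 * (p - 1)) = 1 - 1 / 2 * (p / (p - 1)) := by field_simp; ring
      _ ≤ 1 - (1 - 1 / p) ^ (p - 1) * (p / (p - 1)) := by gcongr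
end

section
/- Let H be a real (separable) Hilbert space, let 2 < p < ∞, and define U_p : H × H → ℝ by U_p(x,y) = p(1−1/p)^{p−1}·(‖y‖ − (p−1)‖x‖)·(‖x‖+‖y‖)^{p−1} if ‖y‖ ≥ (p−2)‖x‖, and U_p(x,y) = −((p−1)^{2p−2}/p^{p−2})·‖x‖^p if ‖y‖ < (p−2)‖x‖. Set α_p = ((p−2)/(p−1))·(1/2 − 1/e). Then for all x, y ∈ H, U_p(x,y) ≥ ‖y‖^p − (p−1)^p ‖x‖^p + α_p · | ‖y‖ − (p−1)‖x‖ |^p. -/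
/-!
Both sides are positively homogeneous of degree `p` in `(‖x‖, ‖y‖)`, so one may assume
`‖x‖ = 1 + u` and `‖y‖ = p - 1 - u` with `-1 ≤ u ≤ p - 1`. The inequality becomes one in the
single real variable `u`, with breakpoints `u = 0` (where `‖y‖ = (p - 1)‖x‖`) and
`u = 1 / (p - 1)` (where `‖y‖ = (p - 2)‖x‖`), and each piece is elementary calculus:
* for `u ≤ 0`, after bounding `|u|^p ≤ u^2`, the difference of the two sides vanishes at `u = -1`
  and at `u = 0`, its derivative vanishes at `u = 0` and is concave;
* for `0 ≤ u ≤ 1 / (p - 1)` the difference vanishes to second order at `u = 0` and is convex;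
* for `u ≥ 1 / (p - 1)` it is increasing, and at `u = 1 / (p - 1)` it equals the previous case.
The three bounds on `α_p` that these steps need follow from `log x ≤ x - 1` and
`0 ≤ 1/2 - 1/e ≤ 1/4`.
-/

open Real Set

section Calculus

variable {f f' f'' : ℝ → ℝ} {a b : ℝ}

lemma le_of_hasDerivAt_nonneg (hf : ∀ x, HasDerivAt f (f' x) x)
    (hf' : ∀ x ∈ Ioo a b, 0 ≤ f' x) (hab : a ≤ b) : f a ≤ f b :=
  monotoneOn_of_hasDerivWithinAt_nonneg (convex_Icc a b)
    (fun x _ => (hf x).continuousAt.continuousWithinAt)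
    (fun x _ => (hf x).hasDerivWithinAt) (by simpa only [interior_Icc] using hf')
    (left_mem_Icc.2 hab) (right_mem_Icc.2 hab) hab

lemma le_of_hasDerivAt_of_hasDerivAt_nonneg (hf : ∀ x, HasDerivAt f (f' x) x)
    (hf' : ∀ x, HasDerivAt f' (f'' x) x) (hf'' : ∀ x ∈ Ioo a b, 0 ≤ f'' x) (ha : 0 ≤ f' a)
    (hab : a ≤ b) : f a ≤ f b :=
  le_of_hasDerivAt_nonneg hf (fun _ hx => ha.trans <| le_of_hasDerivAt_nonneg hf'
    (fun y hy => hf'' y ⟨hy.1, hy.2.trans hx.2⟩) hx.1.le) hab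

lemma le_of_hasDerivAt_nonpos (hf : ∀ x, HasDerivAt f (f' x) x)
    (hf' : ∀ x ∈ Ioo a b, f' x ≤ 0) (hab : a ≤ b) : f b ≤ f a :=
  antitoneOn_of_hasDerivWithinAt_nonpos (convex_Icc a b)
    (fun x _ => (hf x).continuousAt.continuousWithinAt)
    (fun x _ => (hf x).hasDerivWithinAt) (by simpa only [interior_Icc] using hf')
    (left_mem_Icc.2 hab) (right_mem_Icc.2 hab) hab

/-- Since `f'` is concave and `f' a ≥ 0`, once `f'` is negative it stays negative:
`f` first increases and then decreases on `[a, b]`. -/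
lemma nonneg_of_concaveOn_deriv (hf : ∀ x, HasDerivAt f (f' x) x)
    (hf' : ConcaveOn ℝ (Icc a b) f') (ha' : 0 ≤ f' a) (ha : 0 ≤ f a) (hb : 0 ≤ f b)
    {t : ℝ} (ht : t ∈ Icc a b) : 0 ≤ f t := by
  by_cases hpos : ∀ v ∈ Ioo a t, 0 ≤ f' v
  · exact ha.trans (le_of_hasDerivAt_nonneg hf hpos ht.1)
  push Not at hpos
  obtain ⟨v, hv, hv'⟩ := hpos
  refine hb.trans (le_of_hasDerivAt_nonpos hf (fun w hw => ?_) ht.2)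
  have hvw : v ∈ openSegment ℝ a w := by
    rw [openSegment_eq_Ioo (hv.1.trans (hv.2.trans hw.1))]
    exact ⟨hv.1, hv.2.trans hw.1⟩
  exact (hf'.right_le_of_le_left (left_mem_Icc.2 (ht.1.trans ht.2))
    ⟨ht.1.trans hw.1.le, hw.2.le⟩ hvw (hv'.le.trans ha')).trans hv'.le

lemma hasDerivAt_const_add_rpow {e : ℝ} (he : 1 ≤ e) (c x : ℝ) :
    HasDerivAt (fun t => (c + t) ^ e) (e * (c + x) ^ (e - 1)) x := by
  simpa using ((hasDerivAt_id x).const_add c).rpow_const (p := e) (Or.inr he)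

lemma hasDerivAt_const_sub_rpow {e : ℝ} (he : 1 ≤ e) (c x : ℝ) :
    HasDerivAt (fun t => (c - t) ^ e) (-(e * (c - x) ^ (e - 1))) x := by
  simpa using ((hasDerivAt_id x).const_sub c).rpow_const (p := e) (Or.inr he)

end Calculus

lemma add_one_rpow_le_exp_one_mul_rpow {q : ℝ} (hq : 0 < q) :
    (q + 1) ^ q ≤ exp 1 * q ^ q := by
  have h : q + 1 ≤ q * exp (1 / q) := by
    have := mul_le_mul_of_nonneg_left (add_one_le_exp (1 / q)) hq.le
    rwa [mul_add, mul_one_div_cancel hq.ne', mul_one, add_comm] at this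
  calc (q + 1) ^ q ≤ (q * exp (1 / q)) ^ q := by gcongr
    _ = exp 1 * q ^ q := by
      rw [mul_rpow hq.le (exp_pos _).le, ← exp_mul, one_div_mul_cancel hq.ne', mul_comm]

variable {p c : ℝ}

lemma sub_one_div_rpow_le (hp : 2 ≤ p) :
    ((p - 1) / p) ^ (p - 2) ≤ p / (2 * (p - 1)) := by
  have hp0 : 0 < p := by linarith
  calc ((p - 1) / p) ^ (p - 2) ≤ exp (-(1 / p)) ^ (p - 2) := by
        gcongr
        · exact div_nonneg (by linarith) hp0.le
        · linarith [add_one_le_exp (-(1 / p)), show (p - 1) / p = -(1 / p) + 1 by field_simp; ring]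
    _ = (exp ((p - 2) / p))⁻¹ := by rw [← exp_mul, ← exp_neg]; ring_nf
    _ ≤ (1 + (p - 2) / p)⁻¹ := by
        have : 0 ≤ (p - 2) / p := div_nonneg (by linarith) hp0.le
        gcongr; linarith [add_one_le_exp ((p - 2) / p)]
    _ = p / (2 * (p - 1)) := by
        rw [show 1 + (p - 2) / p = 2 * (p - 1) / p by field_simp; ring, inv_div]

lemma sub_two_mul_log_div_add_le_log (hp : 2 < p) (hc0 : 0 ≤ c) (hc : c ≤ 1 / 4) :
    (p - 2) * log (p / (p - 1)) + (p - 2) / (p - 1) * c ≤ log (p - 1) := by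
  rcases le_or_gt p 3 with hp3 | hp3
  -- near `p = 2`, `1 - 1 / (p - 1) ≤ log (p - 1)` is too weak; apply it to `√(p - 1)` instead
  · obtain ⟨r, hr, rfl⟩ : ∃ r, 1 < r ∧ p = r ^ 2 + 1 :=
      ⟨√(p - 1), by rw [lt_sqrt zero_le_one]; linarith, by rw [sq_sqrt (by linarith)]; ring⟩
    rw [show r ^ 2 + 1 - 2 = r ^ 2 - 1 by ring, add_sub_cancel_right]
    have hr0 : 0 < r := by linarith
    have hlog : 2 * (1 - r⁻¹) ≤ log (r ^ 2) := by
      rw [log_pow]; push_cast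
      linarith [one_sub_inv_le_log_of_pos hr0]
    have hlogd : log ((r ^ 2 + 1) / r ^ 2) ≤ log 2 + (1 - r ^ 2) / (2 * r ^ 2) := by
      have h := log_le_sub_one_of_pos (show 0 < (r ^ 2 + 1) / (2 * r ^ 2) by positivity)
      rw [show (r ^ 2 + 1) / r ^ 2 = 2 * ((r ^ 2 + 1) / (2 * r ^ 2)) by field_simp,
        log_mul two_ne_zero (by positivity)]
      have : (r ^ 2 + 1) / (2 * r ^ 2) - 1 = (1 - r ^ 2) / (2 * r ^ 2) := by field_simp; ring
      linarith
    have hbracket : (r + 1) * (2 * r ^ 2 * log 2 - r ^ 2 + 1 + 2 * c) - 4 * r ≤ 0 := by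
      have hr' : r ≤ 1.42 := by nlinarith
      have hL := mul_le_mul_of_nonneg_left log_two_lt_d9.le
        (show 0 ≤ 2 * r ^ 2 * (r + 1) by positivity)
      nlinarith [mul_nonneg (sub_nonneg.2 hr.le) (sub_nonneg.2 hr'), mul_nonneg hr0.le
        (mul_nonneg (sub_nonneg.2 hr.le) (sub_nonneg.2 hr'))]
    have hfrac : (r - 1) * ((r + 1) * (2 * r ^ 2 * log 2 - r ^ 2 + 1 + 2 * c) - 4 * r)
        / (2 * r ^ 2) ≤ 0 :=
      div_nonpos_of_nonpos_of_nonneg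
        (mul_nonpos_of_nonneg_of_nonpos (sub_nonneg.2 hr.le) hbracket) (by positivity)
    calc (r ^ 2 - 1) * log ((r ^ 2 + 1) / r ^ 2) + (r ^ 2 - 1) / r ^ 2 * c
        ≤ (r ^ 2 - 1) * (log 2 + (1 - r ^ 2) / (2 * r ^ 2)) + (r ^ 2 - 1) / r ^ 2 * c := by
          gcongr; nlinarith
      _ = (r - 1) * ((r + 1) * (2 * r ^ 2 * log 2 - r ^ 2 + 1 + 2 * c) - 4 * r) / (2 * r ^ 2)
          + 2 * (1 - r⁻¹) := by field_simp; ring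
      _ ≤ log (r ^ 2) := by linarith
  · obtain ⟨q, hq, rfl⟩ : ∃ q, 2 < q ∧ p = q + 1 := ⟨p - 1, by linarith, by ring⟩
    rw [add_sub_cancel_right, show q + 1 - 2 = q - 1 by ring]
    have hq0 : 0 < q := by linarith
    have hlogd : log ((q + 1) / q) ≤ 1 / q := by
      have := log_le_sub_one_of_pos (show 0 < (q + 1) / q by positivity)
      rwa [show (q + 1) / q - 1 = 1 / q by field_simp; ring] at this
    have hlog : log 2 + 1 - 2 / q ≤ log q := by
      have := log_le_sub_one_of_pos (show 0 < 2 / q by positivity)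
      rw [log_div two_ne_zero hq0.ne'] at this
      linarith
    have hnum : 0 ≤ (q * log 2 - c * (q - 1) - 1) / q :=
      div_nonneg (by nlinarith [log_two_gt_d9]) hq0.le
    calc (q - 1) * log ((q + 1) / q) + (q - 1) / q * c ≤ (q - 1) * (1 / q) + (q - 1) / q * c := by
          gcongr; linarith
      _ = log 2 + 1 - 2 / q - (q * log 2 - c * (q - 1) - 1) / q := by field_simp; ring
      _ ≤ log q := by linarith

lemma one_add_mul_mul_rpow_le (hp : 2 < p) (hc0 : 0 ≤ c) (hc : c ≤ 1 / 4) :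
    (1 + (p - 2) / (p - 1) * c) * p ^ (p - 2) ≤ (p - 1) ^ (p - 1) := by
  have hp0 : 0 < p := by linarith
  have hq : 0 < p - 1 := by linarith
  have hα : 0 ≤ (p - 2) / (p - 1) * c := mul_nonneg (div_nonneg (by linarith) hq.le) hc0
  rw [← log_le_log_iff (by positivity) (by positivity), log_mul (by positivity) (by positivity),
    log_rpow hp0, log_rpow hq, show p = p / (p - 1) * (p - 1) by field_simp,
    log_mul (by positivity) hq.ne', div_mul_cancel₀ _ hq.ne']
  have := sub_two_mul_log_div_add_le_log hp hc0 hc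
  have := log_le_sub_one_of_pos (show 0 < 1 + (p - 2) / (p - 1) * c by positivity)
  nlinarith

lemma div_mul_mul_le (hp : 2 < p) (hc : c ≤ 1 / 4) :
    (p - 2) / (p - 1) * c * p ≤ (p - 2) / 2 := by
  have hq : 0 < p - 1 := by linarith
  rw [div_mul_eq_mul_div, div_mul_eq_mul_div, div_le_div_iff₀ hq two_pos]
  nlinarith [mul_nonneg (by linarith : 0 ≤ p - 2) (by nlinarith : 0 ≤ p - 1 - 2 * c * p)]

lemma div_mul_mul_rpow_le (hp : 2 < p) (hc0 : 0 ≤ c) (hc : c ≤ 1 / 4) :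
    (p - 2) / (p - 1) * c * p ^ p ≤
      (p - 1) ^ (p - 2) * ((p - 1) ^ p - (p - 1) ^ (p - 2)) := by
  have hq : 0 < p - 1 := by linarith
  set X := (p - 1) ^ (p - 2) with hX
  have hX1 : 1 ≤ X := one_le_rpow (by linarith) (by linarith)
  have hpow : (p - 1) ^ p = X * (p - 1) ^ 2 := by
    rw [hX, ← rpow_natCast, ← rpow_add hq]; norm_num
  have hpp : p ^ p = p ^ (p - 1) * p := by
    rw [← rpow_add_one (by linarith)]; ring_nf
  have he : p ^ (p - 1) ≤ exp 1 * (X * (p - 1)) := by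
    have := add_one_rpow_le_exp_one_mul_rpow hq
    rwa [sub_add_cancel, show (p - 1) ^ (p - 1) = X * (p - 1) by
      rw [hX, ← rpow_add_one hq.ne']; ring_nf] at this
  have hce : c * exp 1 ≤ 1 := by nlinarith [exp_one_lt_d9]
  have hp2 : 0 ≤ p - 2 := by linarith
  calc (p - 2) / (p - 1) * c * p ^ p
      ≤ (p - 2) / (p - 1) * c * (exp 1 * (X * (p - 1)) * p) := by
        rw [hpp]; gcongr
    _ = (p - 2) * p * X * (c * exp 1) := by field_simp
    _ ≤ (p - 2) * p * X * X := by gcongr; nlinarith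
    _ = X * ((p - 1) ^ p - X) := by rw [hpow]; ring

variable {α : ℝ}

lemma rpow_sub_add_mul_rpow_le (hp : 2 < p) (hα0 : 0 ≤ α)
    (hα : α * p ^ p ≤ (p - 1) ^ (p - 2) * ((p - 1) ^ p - (p - 1) ^ (p - 2)))
    {x : ℝ} (hx0 : 0 ≤ x) (hx : x * (p - 1) ≤ 1) :
    (p - 1 - x) ^ (p - 2) + α * p ^ p * x ^ (p - 2) ≤ (p - 1) ^ p * (1 + x) ^ (p - 2) := by
  have hq : 0 < p - 1 := by linarith
  have hp2 : 0 ≤ p - 2 := by linarith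
  have h1 : (p - 1 - x) ^ (p - 2) ≤ (p - 1) ^ (p - 2) :=
    rpow_le_rpow (by nlinarith) (by linarith) hp2
  have h2 : (p - 1) ^ p ≤ (p - 1) ^ p * (1 + x) ^ (p - 2) :=
    le_mul_of_one_le_right (by positivity) (one_le_rpow (by linarith) hp2)
  have h3 : α * p ^ p * x ^ (p - 2) ≤ (p - 1) ^ p - (p - 1) ^ (p - 2) := by
    have hx' : x ^ (p - 2) * (p - 1) ^ (p - 2) ≤ 1 := by
      rw [← mul_rpow hx0 hq.le]; exact rpow_le_one (by positivity) hx hp2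
    refine le_of_mul_le_mul_left ?_ (by positivity : 0 < (p - 1) ^ (p - 2))
    nlinarith [mul_le_mul_of_nonneg_left hx' (by positivity : 0 ≤ α * p ^ p)]
  linarith

lemma normalized_ineq_of_mul_le_one (hp : 2 < p) (hα0 : 0 ≤ α)
    (hα : α * p ^ p ≤ (p - 1) ^ (p - 2) * ((p - 1) ^ p - (p - 1) ^ (p - 2)))
    {u : ℝ} (hu0 : 0 ≤ u) (hu : u * (p - 1) ≤ 1) :
    (p - 1 - u) ^ p - (p - 1) ^ p * (1 + u) ^ p + α * p ^ p * u ^ p ≤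
      -(p ^ 2 * (p - 1) ^ (p - 1) * u) := by
  have hp1 : 1 ≤ p := by linarith
  have hq1 : 1 ≤ p - 1 := by linarith
  have hq : 0 < p - 1 := by linarith
  have hΨ : ∀ t, HasDerivAt
      (fun t => (p - 1) ^ p * (1 + t) ^ p - (p - 1 - t) ^ p - p ^ 2 * (p - 1) ^ (p - 1) * t
        - α * p ^ p * t ^ p)
      ((p - 1) ^ p * (p * (1 + t) ^ (p - 1)) + p * (p - 1 - t) ^ (p - 1)
        - p ^ 2 * (p - 1) ^ (p - 1) - α * p ^ p * (p * t ^ (p - 1))) t := fun t =>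
    (((((hasDerivAt_const_add_rpow hp1 1 t).const_mul _).sub
      (hasDerivAt_const_sub_rpow hp1 (p - 1) t)).sub ((hasDerivAt_id t).const_mul _)).sub
      ((hasDerivAt_rpow_const (Or.inr hp1)).const_mul _)).congr_deriv (by ring)
  have hΨ' : ∀ t, HasDerivAt
      (fun t => (p - 1) ^ p * (p * (1 + t) ^ (p - 1)) + p * (p - 1 - t) ^ (p - 1)
        - p ^ 2 * (p - 1) ^ (p - 1) - α * p ^ p * (p * t ^ (p - 1)))
      (p * (p - 1) * ((p - 1) ^ p * (1 + t) ^ (p - 2) - (p - 1 - t) ^ (p - 2)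
        - α * p ^ p * t ^ (p - 2))) t := by
    intro t
    have h := (((((hasDerivAt_const_add_rpow hq1 1 t).const_mul p).const_mul ((p - 1) ^ p)).add
      ((hasDerivAt_const_sub_rpow hq1 (p - 1) t).const_mul p)).sub
      (hasDerivAt_const t (p ^ 2 * (p - 1) ^ (p - 1)))).sub
      (((hasDerivAt_rpow_const (Or.inr hq1)).const_mul p).const_mul (α * p ^ p))
    rw [show p - 1 - 1 = p - 2 by ring] at h
    exact h.congr_deriv (by ring)
  have hΨ'' : ∀ x ∈ Ioo 0 u, 0 ≤ p * (p - 1) * ((p - 1) ^ p * (1 + x) ^ (p - 2)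
      - (p - 1 - x) ^ (p - 2) - α * p ^ p * x ^ (p - 2)) := by
    rintro x ⟨hx0, hxu⟩
    have := rpow_sub_add_mul_rpow_le hp hα0 hα hx0.le (by nlinarith)
    exact mul_nonneg (by positivity) (by linarith)
  have h := le_of_hasDerivAt_of_hasDerivAt_nonneg hΨ hΨ' hΨ'' (by
    simp only [add_zero, sub_zero, one_rpow, zero_rpow (by linarith : p - 1 ≠ 0)]
    rw [show (p - 1) ^ p = (p - 1) ^ (p - 1) * (p - 1) by rw [← rpow_add_one hq.ne']; ring_nf]
    nlinarith) hu0
  simp only [add_zero, sub_zero, one_rpow, zero_rpow (by linarith : p ≠ 0)] at h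
  linarith

lemma mul_mul_rpow_le_rpow_sub (hp : 2 < p) (hαp : α * p ≤ (p - 2) / 2) :
    α * p * (p - 1) ^ (p - 1) ≤ (p - 1) ^ p - (p - 1) ^ (2 * p - 2) / p ^ (p - 2) := by
  have hp0 : 0 < p := by linarith
  have hq : 0 < p - 1 := by linarith
  have hpow : (p - 1) ^ p = (p - 1) ^ (p - 1) * (p - 1) := by
    rw [← rpow_add_one hq.ne']; ring_nf
  have hK : (p - 1) ^ (2 * p - 2) / p ^ (p - 2) = (p - 1) ^ p * ((p - 1) / p) ^ (p - 2) := by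
    rw [div_rpow hq.le hp0.le, mul_div_assoc', ← rpow_add hq]; ring_nf
  have : (p - 1) ^ (2 * p - 2) / p ^ (p - 2) ≤ (p - 1) ^ (p - 1) * (p / 2) := by
    calc _ ≤ (p - 1) ^ p * (p / (2 * (p - 1))) := by
          rw [hK]; gcongr; exact sub_one_div_rpow_le hp.le
      _ = (p - 1) ^ (p - 1) * (p / 2) := by rw [hpow]; field_simp
  nlinarith [mul_le_mul_of_nonneg_right hαp (by positivity : 0 ≤ (p - 1) ^ (p - 1))]

/-- The two branches of `burkholderU` agree on the line `b = (p - 2) a`. -/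
lemma rpow_div_rpow_mul_div_rpow (hp : 1 < p) :
    (p - 1) ^ (2 * p - 2) / p ^ (p - 2) * (p / (p - 1)) ^ p = p ^ 2 * (p - 1) ^ (p - 2) := by
  have hp0 : 0 < p := by linarith
  have hq : 0 < p - 1 := by linarith
  rw [div_rpow hp0.le hq.le,
    show (p - 1) ^ (2 * p - 2) = (p - 1) ^ (p - 2) * (p - 1) ^ p by rw [← rpow_add hq]; ring_nf,
    show p ^ p = p ^ (p - 2) * p ^ 2 by rw [← rpow_natCast, ← rpow_add hp0]; norm_num]
  have : (p - 1) ^ p ≠ 0 := by positivity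
  have : p ^ (p - 2) ≠ 0 := by positivity
  field_simp

lemma normalized_ineq_of_one_le_mul (hp : 2 < p) (hα0 : 0 ≤ α)
    (hα : α * p ^ p ≤ (p - 1) ^ (p - 2) * ((p - 1) ^ p - (p - 1) ^ (p - 2)))
    (hαp : α * p ≤ (p - 2) / 2) {u : ℝ} (hu0 : 1 ≤ u * (p - 1)) (hu1 : u ≤ p - 1) :
    (p - 1 - u) ^ p - (p - 1) ^ p * (1 + u) ^ p + α * p ^ p * u ^ p ≤
      -((p - 1) ^ (2 * p - 2) / p ^ (p - 2)) * (1 + u) ^ p := by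
  have hp0 : 0 < p := by linarith
  have hp1 : 1 ≤ p := by linarith
  have hq : 0 < p - 1 := by linarith
  set K := (p - 1) ^ (2 * p - 2) / p ^ (p - 2) with hK
  have hΘ : ∀ t, HasDerivAt
      (fun t => ((p - 1) ^ p - K) * (1 + t) ^ p - (p - 1 - t) ^ p - α * p ^ p * t ^ p)
      (((p - 1) ^ p - K) * (p * (1 + t) ^ (p - 1)) + p * (p - 1 - t) ^ (p - 1)
        - α * p ^ p * (p * t ^ (p - 1))) t := fun t =>
    ((((hasDerivAt_const_add_rpow hp1 1 t).const_mul _).sub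
      (hasDerivAt_const_sub_rpow hp1 (p - 1) t)).sub
      ((hasDerivAt_rpow_const (Or.inr hp1)).const_mul _)).congr_deriv (by ring)
  have hΘ' : ∀ x ∈ Ioo (p - 1)⁻¹ u, 0 ≤ ((p - 1) ^ p - K) * (p * (1 + x) ^ (p - 1))
      + p * (p - 1 - x) ^ (p - 1) - α * p ^ p * (p * x ^ (p - 1)) := by
    rintro x ⟨hxQ, hxu⟩
    have hx0 : 0 < x := (inv_pos.2 hq).trans hxQ
    have hx : x ^ (p - 1) ≤ ((p - 1) / p) ^ (p - 1) * (1 + x) ^ (p - 1) := by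
      rw [← mul_rpow (by positivity) (by positivity)]
      apply rpow_le_rpow hx0.le _ hq.le
      rw [div_mul_eq_mul_div, le_div_iff₀ hp0]; nlinarith
    have hxp : α * p ^ p * (p * (((p - 1) / p) ^ (p - 1) * (1 + x) ^ (p - 1)))
        = α * p * (p - 1) ^ (p - 1) * (p * (1 + x) ^ (p - 1)) := by
      rw [div_rpow hq.le hp0.le, show p ^ p = p ^ (p - 1) * p by
        rw [← rpow_add_one hp0.ne']; ring_nf]
      field_simp
    have : 0 ≤ p * (p - 1 - x) ^ (p - 1) := by
      have : 0 ≤ p - 1 - x := by linarith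
      positivity
    nlinarith [mul_le_mul_of_nonneg_left hx (by positivity : 0 ≤ α * p ^ p * p),
      mul_le_mul_of_nonneg_right (mul_mul_rpow_le_rpow_sub hp hαp)
        (by positivity : 0 ≤ p * (1 + x) ^ (p - 1))]
  have hΘQ : 0 ≤ ((p - 1) ^ p - K) * (1 + (p - 1)⁻¹) ^ p - (p - 1 - (p - 1)⁻¹) ^ p
      - α * p ^ p * ((p - 1)⁻¹) ^ p := by
    have h := normalized_ineq_of_mul_le_one hp hα0 hα (inv_pos.2 hq).le
      (inv_mul_cancel₀ hq.ne').le
    have hKQ := rpow_div_rpow_mul_div_rpow (by linarith : 1 < p)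
    rw [← hK, show p / (p - 1) = 1 + (p - 1)⁻¹ by field_simp; ring] at hKQ
    have : (p - 1) ^ (p - 2) = (p - 1) ^ (p - 1) * (p - 1)⁻¹ := by
      rw [← div_eq_mul_inv, ← rpow_sub_one hq.ne']; ring_nf
    nlinarith
  have hQu : (p - 1)⁻¹ ≤ u := by rw [inv_le_iff_one_le_mul₀ hq]; linarith
  have := le_of_hasDerivAt_nonneg hΘ hΘ' hQu
  linarith

lemma sub_add_rpow_add_mul_sub_rpow_sub_mul_sq_nonneg (hp : 2 < p) {s : ℝ} (hs0 : 0 ≤ s)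
    (hs1 : s ≤ 1) :
    0 ≤ p ^ 2 * (p - 1) ^ (p - 1) * s - (p - 1 + s) ^ p + (p - 1) ^ p * (1 - s) ^ p
      - (p ^ 2 * (p - 1) ^ (p - 1) - p ^ p) * s ^ 2 := by
  have hp0 : 0 < p := by linarith
  have hp1 : 1 ≤ p := by linarith
  have hq1 : 1 ≤ p - 1 := by linarith
  have hq : 0 < p - 1 := by linarith
  set M := p ^ 2 * (p - 1) ^ (p - 1) - p ^ p with hM
  have hD : ∀ t, HasDerivAt
      (fun t => p ^ 2 * (p - 1) ^ (p - 1) * t - (p - 1 + t) ^ p + (p - 1) ^ p * (1 - t) ^ p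
        - M * t ^ 2)
      (p ^ 2 * (p - 1) ^ (p - 1) - p * (p - 1 + t) ^ (p - 1) - (p - 1) ^ p * (p * (1 - t) ^ (p - 1))
        - M * (2 * t)) t := fun t =>
    (((((hasDerivAt_id t).const_mul _).sub (hasDerivAt_const_add_rpow hp1 (p - 1) t)).add
      ((hasDerivAt_const_sub_rpow hp1 1 t).const_mul _)).sub
      ((hasDerivAt_pow 2 t).const_mul M)).congr_deriv (by simp; ring)
  have hD' : ∀ t, HasDerivAt
      (fun t => p ^ 2 * (p - 1) ^ (p - 1) - p * (p - 1 + t) ^ (p - 1)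
        - (p - 1) ^ p * (p * (1 - t) ^ (p - 1)) - M * (2 * t))
      ((p - 1) ^ p * (p * ((p - 1) * (1 - t) ^ (p - 2))) - p * ((p - 1) * (p - 1 + t) ^ (p - 2))
        - 2 * M) t := by
    intro t
    have h := ((((hasDerivAt_const t (p ^ 2 * (p - 1) ^ (p - 1))).sub
      ((hasDerivAt_const_add_rpow hq1 (p - 1) t).const_mul p)).sub
      (((hasDerivAt_const_sub_rpow hq1 1 t).const_mul p).const_mul ((p - 1) ^ p))).sub
      (((hasDerivAt_id t).const_mul 2).const_mul M))
    rw [show p - 1 - 1 = p - 2 by ring] at h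
    exact h.congr_deriv (by simp; ring)
  have hconc : ConcaveOn ℝ (Icc 0 1) (fun t => p ^ 2 * (p - 1) ^ (p - 1)
      - p * (p - 1 + t) ^ (p - 1) - (p - 1) ^ p * (p * (1 - t) ^ (p - 1)) - M * (2 * t)) := by
    refine AntitoneOn.concaveOn_of_deriv (convex_Icc 0 1)
      (fun x _ => (hD' x).continuousAt.continuousWithinAt)
      (fun x _ => (hD' x).differentiableAt.differentiableWithinAt) ?_
    rw [interior_Icc]
    rintro x ⟨hx0, hx1⟩ y ⟨hy0, hy1⟩ hxy
    rw [(hD' x).deriv, (hD' y).deriv]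
    have hp2 : 0 ≤ p - 2 := by linarith
    have h1 : (1 - y) ^ (p - 2) ≤ (1 - x) ^ (p - 2) :=
      rpow_le_rpow (by linarith) (by linarith) hp2
    have h2 : (p - 1 + x) ^ (p - 2) ≤ (p - 1 + y) ^ (p - 2) :=
      rpow_le_rpow (by linarith) (by linarith) hp2
    nlinarith [mul_le_mul_of_nonneg_left h1 (by positivity : 0 ≤ (p - 1) ^ p * (p * (p - 1))),
      mul_le_mul_of_nonneg_left h2 (by positivity : 0 ≤ p * (p - 1))]
  refine nonneg_of_concaveOn_deriv hD hconc ?_ ?_ ?_ ⟨hs0, hs1⟩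
  · simp only [add_zero, sub_zero, one_rpow, mul_zero]
    rw [show (p - 1) ^ p = (p - 1) ^ (p - 1) * (p - 1) by rw [← rpow_add_one hq.ne']; ring_nf]
    nlinarith
  · simp
  · simp only [sub_add_cancel, sub_self, zero_rpow hp0.ne', hM]; linarith

lemma normalized_ineq_of_nonneg (hp : 2 < p) (hα0 : 0 ≤ α)
    (hα : (1 + α) * p ^ (p - 2) ≤ (p - 1) ^ (p - 1)) {s : ℝ} (hs0 : 0 ≤ s) (hs1 : s ≤ 1) :
    (p - 1 + s) ^ p - (p - 1) ^ p * (1 - s) ^ p + α * p ^ p * s ^ p ≤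
      p ^ 2 * (p - 1) ^ (p - 1) * s := by
  have hαM : α * p ^ p ≤ p ^ 2 * (p - 1) ^ (p - 1) - p ^ p := by
    have : p ^ p = p ^ (p - 2) * p ^ 2 := by
      rw [← rpow_natCast, ← rpow_add (by linarith)]; norm_num
    nlinarith [mul_le_mul_of_nonneg_right hα (by positivity : 0 ≤ p ^ 2)]
  have hsp : s ^ p ≤ s ^ 2 := by
    rw [← rpow_natCast]
    exact rpow_le_rpow_of_exponent_ge' hs0 hs1 (by norm_num) (by norm_num; linarith)
  nlinarith [sub_add_rpow_add_mul_sub_rpow_sub_mul_sq_nonneg hp hs0 hs1,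
    mul_le_mul_of_nonneg_left hsp (by positivity : 0 ≤ α * p ^ p),
    mul_le_mul_of_nonneg_right hαM (sq_nonneg s)]

noncomputable def burkholderU (p a b : ℝ) : ℝ :=
  if (p - 2) * a ≤ b then p * (1 - 1 / p) ^ (p - 1) * (b - (p - 1) * a) * (a + b) ^ (p - 1)
  else -((p - 1) ^ (2 * p - 2) / p ^ (p - 2)) * a ^ p

noncomputable def burkholderV (p a b : ℝ) : ℝ := b ^ p - (p - 1) ^ p * a ^ p

variable {a b r : ℝ}

lemma burkholderU_mul (hr : 0 < r) (ha : 0 ≤ a) (hb : 0 ≤ b) :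
    burkholderU p (r * a) (r * b) = r ^ p * burkholderU p a b := by
  have hcond : (p - 2) * (r * a) ≤ r * b ↔ (p - 2) * a ≤ b := by
    rw [mul_left_comm, mul_le_mul_iff_right₀ hr]
  simp only [burkholderU, hcond]
  split_ifs
  · rw [← mul_add, mul_rpow hr.le (add_nonneg ha hb),
      show r ^ p = r * r ^ (p - 1) by rw [mul_comm, ← rpow_add_one hr.ne']; ring_nf]
    ring
  · rw [mul_rpow hr.le ha]; ring

lemma burkholderV_mul (hr : 0 < r) (ha : 0 ≤ a) (hb : 0 ≤ b) :
    burkholderV p (r * a) (r * b) = r ^ p * burkholderV p a b := by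
  simp only [burkholderV, mul_rpow hr.le ha, mul_rpow hr.le hb]; ring

lemma abs_sub_mul_rpow_mul (hr : 0 < r) :
    |r * b - (p - 1) * (r * a)| ^ p = r ^ p * |b - (p - 1) * a| ^ p := by
  rw [show r * b - (p - 1) * (r * a) = r * (b - (p - 1) * a) by ring, abs_mul, abs_of_pos hr,
    mul_rpow hr.le (abs_nonneg _)]

lemma burkholderV_add_le_burkholderU_of_add_eq (hp : 2 < p) (hα0 : 0 ≤ α)
    (hα₁ : (1 + α) * p ^ (p - 2) ≤ (p - 1) ^ (p - 1))
    (hα₂ : α * p ^ p ≤ (p - 1) ^ (p - 2) * ((p - 1) ^ p - (p - 1) ^ (p - 2)))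
    (hα₃ : α * p ≤ (p - 2) / 2) (ha : 0 ≤ a) (hb : 0 ≤ b) (hab : a + b = p) :
    burkholderV p a b + α * |b - (p - 1) * a| ^ p ≤ burkholderU p a b := by
  have hp0 : 0 < p := by linarith
  have hq : 0 < p - 1 := by linarith
  obtain ⟨u, rfl, rfl⟩ : ∃ u, a = 1 + u ∧ b = p - 1 - u := ⟨a - 1, by ring, by linarith⟩
  rw [show p - 1 - u - (p - 1) * (1 + u) = p * -u by ring, abs_mul, abs_of_pos hp0,
    mul_rpow hp0.le (abs_nonneg _), abs_neg]
  simp only [burkholderU, burkholderV]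
  split_ifs with h
  · have hU : p * (1 - 1 / p) ^ (p - 1) * (p - 1 - u - (p - 1) * (1 + u))
        * (1 + u + (p - 1 - u)) ^ (p - 1) = -(p ^ 2 * (p - 1) ^ (p - 1) * u) := by
      rw [show 1 + u + (p - 1 - u) = p by ring,
        show p - 1 - u - (p - 1) * (1 + u) = -(p * u) by ring]
      have : (1 - 1 / p) ^ (p - 1) * p ^ (p - 1) = (p - 1) ^ (p - 1) := by
        rw [← mul_rpow (by rw [sub_nonneg, div_le_one hp0]; linarith) hp0.le]
        congr 1; field_simp
      linear_combination (-(p ^ 2 * u)) * this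
    rw [hU]
    rcases le_or_gt u 0 with hu | hu
    · have := normalized_ineq_of_nonneg hp hα0 hα₁ (s := -u) (by linarith) (by linarith)
      rw [show p - 1 + -u = p - 1 - u by ring, show 1 - -u = 1 + u by ring] at this
      rw [abs_of_nonpos hu]
      linarith
    · have := normalized_ineq_of_mul_le_one hp hα0 hα₂ hu.le (by nlinarith)
      rw [abs_of_pos hu]
      linarith
  · have hu : 0 < u := by nlinarith
    have := normalized_ineq_of_one_le_mul hp hα0 hα₂ hα₃ (u := u) (by nlinarith)
      (by linarith)
    rw [abs_of_pos hu]
    linarith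

lemma burkholderV_add_le_burkholderU {c : ℝ} (hp : 2 < p) (hc0 : 0 ≤ c) (hc : c ≤ 1 / 4)
    (ha : 0 ≤ a) (hb : 0 ≤ b) :
    burkholderV p a b + (p - 2) / (p - 1) * c * |b - (p - 1) * a| ^ p ≤ burkholderU p a b := by
  have hp0 : 0 < p := by linarith
  rcases (add_nonneg ha hb).eq_or_lt with h0 | hpos
  · obtain ⟨rfl, rfl⟩ : a = 0 ∧ b = 0 := ⟨by linarith, by linarith⟩
    simp [burkholderU, burkholderV, zero_rpow hp0.ne']
  obtain ⟨r, a, b, hr, ha', hb', hab, rfl, rfl⟩ :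
      ∃ r a' b', 0 < r ∧ 0 ≤ a' ∧ 0 ≤ b' ∧ a' + b' = p ∧ a = r * a' ∧ b = r * b' :=
    ⟨(a + b) / p, p * a / (a + b), p * b / (a + b), by positivity, by positivity, by positivity,
      by field_simp, by field_simp, by field_simp⟩
  rw [burkholderU_mul hr ha' hb', burkholderV_mul hr ha' hb', abs_sub_mul_rpow_mul hr]
  have := burkholderV_add_le_burkholderU_of_add_eq hp
    (mul_nonneg (div_nonneg (by linarith) (by linarith)) hc0) (one_add_mul_mul_rpow_le hp hc0 hc)
    (div_mul_mul_rpow_le hp hc0 hc) (div_mul_mul_le hp hc) ha' hb' hab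
  have hrp : 0 < r ^ p := by positivity
  nlinarith

theorem stmt_11_general {H : Type*} [NormedAddCommGroup H]
    (p : ℝ) (hp : 2 < p)
    (α : ℝ) (hα : α = (p - 2) / (p - 1) * (1 / 2 - 1 / Real.exp 1))
    (x y : H) :
    (if (p - 2) * ‖x‖ ≤ ‖y‖ then
        p * (1 - 1 / p) ^ (p - 1) * (‖y‖ - (p - 1) * ‖x‖) * (‖x‖ + ‖y‖) ^ (p - 1)
      else -((p - 1) ^ (2 * p - 2) / p ^ (p - 2)) * ‖x‖ ^ p) ≥
      ‖y‖ ^ p - (p - 1) ^ p * ‖x‖ ^ p + α * |‖y‖ - (p - 1) * ‖x‖| ^ p := by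
  have he : 1 / 4 ≤ 1 / exp 1 :=
    one_div_le_one_div_of_le (exp_pos 1) (by linarith [exp_one_lt_three])
  have he' : 1 / exp 1 ≤ 1 / 2 := one_div_le_one_div_of_le two_pos exp_one_gt_two.le
  subst hα
  exact burkholderV_add_le_burkholderU hp (by linarith) (by linarith)
    (norm_nonneg x) (norm_nonneg y)

theorem stmt_11 {H : Type*} [NormedAddCommGroup H] [InnerProductSpace ℝ H]
    [SecondCountableTopology H]
    (p : ℝ) (hp : 2 < p)
    (α : ℝ) (hα : α = (p - 2) / (p - 1) * (1 / 2 - 1 / Real.exp 1))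
    (x y : H) :
    (if (p - 2) * ‖x‖ ≤ ‖y‖ then
        p * (1 - 1 / p) ^ (p - 1) * (‖y‖ - (p - 1) * ‖x‖) * (‖x‖ + ‖y‖) ^ (p - 1)
      else -((p - 1) ^ (2 * p - 2) / p ^ (p - 2)) * ‖x‖ ^ p) ≥
      ‖y‖ ^ p - (p - 1) ^ p * ‖x‖ ^ p + α * |‖y‖ - (p - 1) * ‖x‖| ^ p :=
  stmt_11_general p hp α hα x y
end

section
/- Let H be a real (separable) Hilbert space, let 2 < p < ∞, and define U_p : H × H → ℝ by U_p(x,y) = p(1−1/p)^{p−1}·(‖y‖ − (p−1)‖x‖)·(‖x‖+‖y‖)^{p−1} if ‖y‖ ≥ (p−2)‖x‖, and U_p(x,y) = −((p−1)^{2p−2}/p^{p−2})·‖x‖^p if ‖y‖ < (p−2)‖x‖. Then for every fixed x ∈ H, the function y ↦ U_p(x,y) is convex on H. -/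
/-!
Write `a = ‖x‖` and `φ(t) = p (1 - 1/p)^(p-1) (t - (p-1) a) (a + t)^(p-1)`. At the threshold
`t = (p-2) a` the value of `φ` is exactly the constant of the second branch, so
`U_p(x, y) = φ(max((p-2) a, ‖y‖))`. On `[(p-2) a, ∞)` one has
`φ'(t) = p (1 - 1/p)^(p-1) · p (a + t)^(p-2) (t - (p-2) a)`, a nonnegative product of two
nondecreasing nonnegative factors, so `φ` is nondecreasing and convex there. A nondecreasing convex
function of the convex function `y ↦ max((p-2) a, ‖y‖)` is convex.
-/

open Set Real

theorem ConvexOn.comp_of_mapsTo {𝕜 E α β : Type*} [Semiring 𝕜] [PartialOrder 𝕜]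
    [AddCommMonoid E] [AddCommMonoid α] [PartialOrder α] [AddCommMonoid β] [PartialOrder β]
    [SMul 𝕜 E] [SMul 𝕜 α] [SMul 𝕜 β] {s : Set E} {t : Set β} {f : E → β} {g : β → α}
    (hg : ConvexOn 𝕜 t g) (hf : ConvexOn 𝕜 s f) (hg' : MonotoneOn g t) (hst : MapsTo f s t) :
    ConvexOn 𝕜 s (g ∘ f) :=
  ⟨hf.1, fun _ hx _ hy _ _ ha hb hab =>
    (hg' (hst (hf.1 hx hy ha hb hab)) (hg.1 (hst hx) (hst hy) ha hb hab)
      (hf.2 hx hy ha hb hab)).trans (hg.2 (hst hx) (hst hy) ha hb hab)⟩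

lemma add_pos_of_sub_two_mul_lt {p a t : ℝ} (hp : 1 ≤ p) (ha : 0 ≤ a) (ht : (p - 2) * a < t) :
    0 < a + t := by
  nlinarith

noncomputable def burkholderProfile (p a t : ℝ) : ℝ :=
  p * (1 - 1 / p) ^ (p - 1) * (t - (p - 1) * a) * (a + t) ^ (p - 1)

namespace burkholderProfile

lemma leadingCoeff_nonneg {p : ℝ} (hp : 1 ≤ p) : 0 ≤ p * (1 - 1 / p) ^ (p - 1) := by
  have : 0 ≤ 1 - 1 / p := sub_nonneg.2 (div_le_one_of_le₀ hp (by linarith))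
  positivity

lemma hasDerivAt (p a : ℝ) {t : ℝ} (ht : 0 < a + t) :
    HasDerivAt (burkholderProfile p a)
      (p * (1 - 1 / p) ^ (p - 1) * (p * (a + t) ^ (p - 2) * (t - (p - 2) * a))) t := by
  have hpow : HasDerivAt (fun t => (a + t) ^ (p - 1)) (1 * (p - 1) * (a + t) ^ (p - 1 - 1)) t :=
    ((hasDerivAt_id t).const_add a).rpow_const (Or.inl ht.ne')
  have hlin : HasDerivAt (fun t => p * (1 - 1 / p) ^ (p - 1) * (t - (p - 1) * a))
      (p * (1 - 1 / p) ^ (p - 1) * 1) t :=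
    ((hasDerivAt_id t).sub_const _).const_mul _
  refine (hlin.mul hpow).congr_deriv ?_
  have hsplit : (a + t) ^ (p - 1) = (a + t) ^ (p - 2) * (a + t) := by
    rw [← rpow_add_one ht.ne']; ring_nf
  rw [hsplit, show p - 1 - 1 = p - 2 by ring]
  ring

lemma continuousOn {p a : ℝ} (hp : 1 ≤ p) :
    ContinuousOn (burkholderProfile p a) (Ici ((p - 2) * a)) :=
  (continuousOn_const.mul (continuousOn_id.sub continuousOn_const)).mul
    ((continuousOn_const.add continuousOn_id).rpow_const fun _ _ => Or.inr (by linarith))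

lemma differentiableOn {p a : ℝ} (hp : 1 ≤ p) (ha : 0 ≤ a) :
    DifferentiableOn ℝ (burkholderProfile p a) (Ioi ((p - 2) * a)) := fun _ ht =>
  (hasDerivAt p a (add_pos_of_sub_two_mul_lt hp ha ht)).differentiableAt.differentiableWithinAt

lemma monotoneOn {p a : ℝ} (hp : 1 ≤ p) (ha : 0 ≤ a) :
    MonotoneOn (burkholderProfile p a) (Ici ((p - 2) * a)) := by
  refine monotoneOn_of_deriv_nonneg (convex_Ici _) (continuousOn hp) ?_ ?_ <;> rw [interior_Ici]
  · exact differentiableOn hp ha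
  intro t ht
  have ht₀ := add_pos_of_sub_two_mul_lt hp ha ht
  have := leadingCoeff_nonneg hp
  have : 0 ≤ t - (p - 2) * a := by linarith [mem_Ioi.1 ht]
  rw [(hasDerivAt p a ht₀).deriv]
  positivity

lemma convexOn {p a : ℝ} (hp : 2 ≤ p) (ha : 0 ≤ a) :
    ConvexOn ℝ (Ici ((p - 2) * a)) (burkholderProfile p a) := by
  have hp1 : 1 ≤ p := by linarith
  refine MonotoneOn.convexOn_of_deriv (convex_Ici _) (continuousOn hp1) ?_ ?_ <;>
    rw [interior_Ici]
  · exact differentiableOn hp1 ha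
  intro s hs t ht hst
  have hs₀ := add_pos_of_sub_two_mul_lt hp1 ha hs
  rw [(hasDerivAt p a hs₀).deriv, (hasDerivAt p a (add_pos_of_sub_two_mul_lt hp1 ha ht)).deriv]
  have hpow : (a + s) ^ (p - 2) ≤ (a + t) ^ (p - 2) := by gcongr
  have hfactor : (a + s) ^ (p - 2) * (s - (p - 2) * a) ≤ (a + t) ^ (p - 2) * (t - (p - 2) * a) :=
    mul_le_mul hpow (by linarith) (by linarith [mem_Ioi.1 hs]) (rpow_nonneg (by linarith) _)
  nlinarith [leadingCoeff_nonneg hp1,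
    mul_le_mul_of_nonneg_left hfactor (by linarith : (0 : ℝ) ≤ p)]

lemma apply_threshold {p a : ℝ} (hp : 1 < p) (ha : 0 ≤ a) :
    burkholderProfile p a ((p - 2) * a) = -((p - 1) ^ (2 * p - 2) / p ^ (p - 2)) * a ^ p := by
  have hp₀ : 0 < p := by linarith
  have hp₁ : 0 ≤ p - 1 := by linarith
  have hcoeff : (1 - 1 / p) ^ (p - 1) = (p - 1) ^ (p - 1) / p ^ (p - 1) := by
    rw [← div_rpow hp₁ hp₀.le]; field_simp
  have hsq : (p - 1) ^ (p - 1) * (p - 1) ^ (p - 1) = (p - 1) ^ (2 * p - 2) := by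
    rw [← rpow_add' hp₁ (by linarith)]; ring_nf
  have hp_pow : p ^ (p - 1) = p ^ (p - 2) * p := by
    rw [← rpow_add_one hp₀.ne']; ring_nf
  have ha_pow : a ^ (p - 1) * a = a ^ p := by
    rw [← rpow_add_one' ha (by linarith)]; ring_nf
  have : 0 < p ^ (p - 2) := rpow_pos_of_pos hp₀ _
  rw [burkholderProfile, show a + (p - 2) * a = (p - 1) * a by ring, mul_rpow hp₁ ha, hcoeff,
    hp_pow, ← hsq, ← ha_pow]
  field_simp
  ring

end burkholderProfile

theorem stmt_12_general {H : Type*} [NormedAddCommGroup H] [InnerProductSpace ℝ H]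
    (p : ℝ) (hp : 2 < p) (x : H) :
    ConvexOn ℝ Set.univ (fun y : H =>
      if (p - 2) * ‖x‖ ≤ ‖y‖ then
        p * (1 - 1 / p) ^ (p - 1) * (‖y‖ - (p - 1) * ‖x‖) * (‖x‖ + ‖y‖) ^ (p - 1)
      else -((p - 1) ^ (2 * p - 2) / p ^ (p - 2)) * ‖x‖ ^ p) := by
  have hx := norm_nonneg x
  have hmax : ConvexOn ℝ univ fun y : H => max ((p - 2) * ‖x‖) ‖y‖ :=
    (convexOn_const _ convex_univ).sup convexOn_univ_norm
  refine ((burkholderProfile.convexOn hp.le hx).comp_of_mapsTo hmax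
    (burkholderProfile.monotoneOn (by linarith) hx) fun _ _ => mem_Ici.2 (le_max_left _ _)).congr
    fun y _ => ?_
  by_cases hy : (p - 2) * ‖x‖ ≤ ‖y‖
  · rw [if_pos hy, Function.comp_apply, max_eq_right hy, burkholderProfile]
  · rw [if_neg hy, Function.comp_apply, max_eq_left (not_le.1 hy).le,
      burkholderProfile.apply_threshold (by linarith) hx]

theorem stmt_12 {H : Type*} [NormedAddCommGroup H] [InnerProductSpace ℝ H]
    [SecondCountableTopology H]
    (p : ℝ) (hp : 2 < p) (x : H) :
    ConvexOn ℝ Set.univ (fun y : H =>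
      if (p - 2) * ‖x‖ ≤ ‖y‖ then
        p * (1 - 1 / p) ^ (p - 1) * (‖y‖ - (p - 1) * ‖x‖) * (‖x‖ + ‖y‖) ^ (p - 1)
      else -((p - 1) ^ (2 * p - 2) / p ^ (p - 2)) * ‖x‖ ^ p) :=
  stmt_12_general p hp x
end

section
/- Let 1 < p < 2, set β_p = sin^{p−1}(π/(2p))/cos(π/(2p)), and define V_p : ℝ × ℝ → ℝ by V_p(x,y) = −β_p · Re(((|x| : ℂ) + i y)^p), where the complex power is the principal branch (this equals −β_p R^p cos(pθ) in the polar coordinates |x| = R cos θ, y = R sin θ with θ ∈ [−π/2, π/2]). Then for every fixed x ∈ ℝ, the function y ↦ V_p(x,y) is convex on ℝ. -/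
/-!
For `a = |x| > 0` the point `a + I y` stays in the right half-plane, where `z ↦ z ^ p` is
holomorphic, and the second `y`-derivative of `-Re ((a + I y) ^ p)` is
`p (p - 1) Re (z ^ (p - 2))` with `z = a + I y`. Since `|arg z| ≤ π / 2` and `|p - 2| ≤ 1`,
`Re (z ^ (p - 2)) = ‖z‖ ^ (p - 2) cos ((p - 2) arg z) ≥ 0`. The degenerate line `a = 0` is the
pointwise limit of the lines `a > 0`, and convex functions form a closed set. Finally
`β_p ≥ 0` because `π / (2p) ∈ (0, π / 2]`.
-/

open Real Complex Set Filter Topology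

theorem Complex.re_cpow_ofReal_nonneg {z : ℂ} (hz : 0 ≤ z.re) {r : ℝ} (hr : |r| ≤ 1) :
    0 ≤ (z ^ (r : ℂ)).re := by
  rw [cpow_ofReal_re]
  refine mul_nonneg (rpow_nonneg (norm_nonneg z) r) (cos_nonneg_of_mem_Icc (abs_le.mp ?_))
  calc |z.arg * r| = |z.arg| * |r| := abs_mul _ _
    _ ≤ π / 2 * 1 := mul_le_mul (abs_arg_le_pi_div_two_iff.mpr hz) hr (abs_nonneg r) (by positivity)
    _ = π / 2 := mul_one _

theorem convexOn_univ_re_of_hasDerivAt2 {f f' f'' : ℝ → ℂ}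
    (hf : ∀ y, HasDerivAt f (f' y) y) (hf' : ∀ y, HasDerivAt f' (f'' y) y)
    (hf'' : ∀ y, 0 ≤ (f'' y).re) : ConvexOn ℝ univ (fun y => (f y).re) := by
  have hre {g g' : ℝ → ℂ} (hg : ∀ y, HasDerivAt g (g' y) y) (y : ℝ) :
      HasDerivAt (fun y => (g y).re) (g' y).re y :=
    reCLM.hasFDerivAt.comp_hasDerivAt y (hg y)
  refine convexOn_of_hasDerivWithinAt2_nonneg convex_univ
    (fun y _ => (hre hf y).continuousAt.continuousWithinAt)
    (fun y _ => (hre hf y).hasDerivWithinAt) (fun y _ => (hre hf' y).hasDerivWithinAt)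
    (fun y _ => hf'' y)

theorem hasDerivAt_cpow_vertical_line {a : ℝ} (ha : 0 < a) (c : ℂ) (y : ℝ) :
    HasDerivAt (fun y : ℝ => ((a : ℂ) + I * y) ^ c) (c * ((a : ℂ) + I * y) ^ (c - 1) * I) y := by
  have hline : HasDerivAt (fun y : ℝ => (a : ℂ) + I * y) I y := by
    simpa using (ofRealCLM.hasDerivAt (x := y)).const_mul I |>.const_add (a : ℂ)
  have hslit : (a : ℂ) + I * y ∈ slitPlane := mem_slitPlane_iff.mpr (Or.inl (by simpa using ha))
  exact (hasStrictDerivAt_cpow_const hslit).hasDerivAt.comp y hline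

theorem convexOn_neg_re_cpow_vertical_line_of_pos {a p : ℝ} (ha : 0 < a) (hp1 : 1 ≤ p)
    (hp3 : p ≤ 3) : ConvexOn ℝ univ (fun y : ℝ => -(((a : ℂ) + I * y) ^ (p : ℂ)).re) := by
  have hf'' (y : ℝ) : HasDerivAt (fun y : ℝ => -(p * ((a : ℂ) + I * y) ^ ((p : ℂ) - 1) * I))
      (((p * (p - 1) : ℝ) : ℂ) * ((a : ℂ) + I * y) ^ ((p - 2 : ℝ) : ℂ)) y := by
    refine (((hasDerivAt_cpow_vertical_line ha _ y).const_mul (p : ℂ)).mul_const I).neg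
      |>.congr_deriv ?_
    rw [show (p : ℂ) - 1 - 1 = ((p - 2 : ℝ) : ℂ) by push_cast; ring]
    generalize ((a : ℂ) + I * y) ^ ((p - 2 : ℝ) : ℂ) = w
    push_cast
    linear_combination (-(p : ℂ) * (p - 1) * w) * I_mul_I
  have hf''_re (y : ℝ) :
      0 ≤ (((p * (p - 1) : ℝ) : ℂ) * ((a : ℂ) + I * y) ^ ((p - 2 : ℝ) : ℂ)).re := by
    rw [re_ofReal_mul]
    refine mul_nonneg (by nlinarith) (re_cpow_ofReal_nonneg (by simpa using ha.le) ?_)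
    exact abs_le.mpr ⟨by linarith, by linarith⟩
  simpa only [neg_re] using convexOn_univ_re_of_hasDerivAt2
    (f := fun y : ℝ => -(((a : ℂ) + I * y) ^ (p : ℂ)))
    (fun y => (hasDerivAt_cpow_vertical_line ha _ y).neg) hf'' hf''_re

theorem convexOn_neg_re_cpow_vertical_line {a p : ℝ} (ha : 0 ≤ a) (hp1 : 1 ≤ p) (hp3 : p ≤ 3) :
    ConvexOn ℝ univ (fun y : ℝ => -(((a : ℂ) + I * y) ^ (p : ℂ)).re) := by
  rcases ha.eq_or_lt with rfl | ha
  · have hlim : Tendsto (fun a : ℝ => fun y : ℝ => -(((a : ℂ) + I * y) ^ (p : ℂ)).re) (𝓝[>] 0)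
        (𝓝 fun y : ℝ => -((((0 : ℝ) : ℂ) + I * y) ^ (p : ℂ)).re) := by
      refine tendsto_pi_nhds.mpr fun y => (ContinuousAt.tendsto ?_).mono_left nhdsWithin_le_nhds
      have hcpow : ContinuousAt (fun z : ℂ => z ^ (p : ℂ)) (((0 : ℝ) : ℂ) + I * y) :=
        continuousAt_cpow_const_of_re_pos (Or.inl (by simp)) (by rw [ofReal_re]; linarith)
      have hline : ContinuousAt (fun a : ℝ => (a : ℂ) + I * y) 0 := by fun_prop
      exact (continuous_re.continuousAt.comp
        (hcpow.comp (f := fun a : ℝ => (a : ℂ) + I * y) hline)).neg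
    exact isClosed_setOfPred_convexOn.mem_of_tendsto hlim (eventually_nhdsWithin_of_forall
      fun a ha => convexOn_neg_re_cpow_vertical_line_of_pos ha hp1 hp3)
  · exact convexOn_neg_re_cpow_vertical_line_of_pos ha hp1 hp3

theorem sin_rpow_div_cos_nonneg_of_one_le {p : ℝ} (hp : 1 ≤ p) :
    0 ≤ Real.sin (π / (2 * p)) ^ (p - 1) / Real.cos (π / (2 * p)) := by
  have h0 : 0 ≤ π / (2 * p) := by positivity
  have h1 : π / (2 * p) ≤ π / 2 := div_le_div_of_nonneg_left pi_pos.le two_pos (by linarith)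
  exact div_nonneg (rpow_nonneg (sin_nonneg_of_nonneg_of_le_pi h0 (by linarith [pi_pos])) _)
    (cos_nonneg_of_mem_Icc ⟨by linarith, h1⟩)

theorem stmt_14 (p : ℝ) (hp1 : 1 < p) (hp2 : p < 2)
    (β : ℝ) (hβ : β = Real.sin (π / (2 * p)) ^ (p - 1) / Real.cos (π / (2 * p)))
    (x : ℝ) :
    ConvexOn ℝ Set.univ (fun y : ℝ =>
      -β * ((((|x| : ℝ) : ℂ) + Complex.I * (y : ℂ)) ^ (p : ℂ)).re) := by
  have hβ0 : 0 ≤ β := hβ ▸ sin_rpow_div_cos_nonneg_of_one_le hp1.le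
  simpa only [Pi.smul_apply, smul_eq_mul, mul_neg, neg_mul] using
    (convexOn_neg_re_cpow_vertical_line (abs_nonneg x) hp1.le (by linarith)).smul hβ0
end

section
/- For every real p ≥ 2, one has sin(π/(2p)) / sin(π/(2(p−1))) ≤ ((p−1)/p)^{1/2}. -/
/-!
Put `x = π / (2p)` and `y = π / (2(p - 1))`. Squared, the inequality reads `p sin² x ≤ (p - 1) sin² y`,
and since `p = π / (2x)` and `p - 1 = π / (2y)` this says that `f t = sin² t / t` satisfies
`f x ≤ f y`, where `0 < x ≤ π/4` and `x ≤ y ≤ π/2`. The derivative of `f` has the sign of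
`2t cos t - sin t`, which is nonnegative on `(0, π/3]`. For `y > π/3` we instead compare both values
with `f (π/4) = 2/π`: `sin²` is concave on `[π/4, π/2]` and its chord there is `2t/π`, so `f ≥ 2/π`
on that interval.
-/

open Real Set

namespace Real

lemma hasDerivAt_sin_sq_div_self {t : ℝ} (ht : t ≠ 0) :
    HasDerivAt (fun t => sin t ^ 2 / t) (sin t * (2 * t * cos t - sin t) / t ^ 2) t := by
  refine (((hasDerivAt_sin t).fun_pow 2).fun_div (hasDerivAt_id' t) ht).congr_deriv ?_
  norm_num
  ring

lemma sin_sq_div_self_monotoneOn : MonotoneOn (fun t => sin t ^ 2 / t) (Ioc 0 (π / 3)) := by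
  refine monotoneOn_of_deriv_nonneg (convex_Ioc 0 (π / 3)) ?_ ?_ ?_
  · exact fun t ht => (hasDerivAt_sin_sq_div_self ht.1.ne').continuousAt.continuousWithinAt
  · exact fun t ht =>
      (hasDerivAt_sin_sq_div_self (interior_subset ht).1.ne').differentiableAt.differentiableWithinAt
  · intro t ht
    rw [interior_Ioc] at ht
    obtain ⟨ht0, ht3⟩ := ht
    rw [(hasDerivAt_sin_sq_div_self ht0.ne').deriv]
    have hsin : 0 ≤ sin t := sin_nonneg_of_nonneg_of_le_pi ht0.le (by linarith [pi_pos])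
    have hcos : 1 / 2 ≤ cos t := by
      rw [← cos_pi_div_three]
      exact cos_le_cos_of_nonneg_of_le_pi ht0.le (by linarith [pi_pos]) ht3.le
    have : 0 ≤ 2 * t * cos t - sin t := by nlinarith [sin_le ht0.le]
    positivity

lemma sin_sq_div_self_pi_div_four : sin (π / 4) ^ 2 / (π / 4) = 2 / π := by
  rw [sin_pi_div_four, div_pow, sq_sqrt zero_le_two]
  field_simp
  norm_num

lemma two_div_pi_le_sin_sq_div_self {y : ℝ} (h₁ : π / 4 ≤ y) (h₂ : y ≤ π / 2) :
    2 / π ≤ sin y ^ 2 / y := by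
  have hy : 0 < y := by linarith [pi_pos]
  have hcos : 1 - 2 / π * (π - 2 * y) ≤ -cos (2 * y) := by
    rw [← cos_pi_sub]
    exact one_sub_mul_le_cos (by linarith) (by linarith)
  have hchord : 2 * y / π ≤ sin y ^ 2 := by
    rw [sin_sq_eq_half_sub]
    have : 1 - 2 / π * (π - 2 * y) = 4 * y / π - 1 := by field_simp; ring
    have : 4 * y / π = 2 * (2 * y / π) := by ring
    linarith
  rw [div_le_div_iff₀ pi_pos hy]
  rw [div_le_iff₀ pi_pos] at hchord
  linarith

lemma sin_sq_div_self_le {x y : ℝ} (hx : 0 < x) (hxy : x ≤ y) (hx₄ : x ≤ π / 4)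
    (hy : y ≤ π / 2) : sin x ^ 2 / x ≤ sin y ^ 2 / y := by
  have hπ : 0 < π := pi_pos
  rcases le_or_gt y (π / 3) with hy₃ | hy₃
  · exact sin_sq_div_self_monotoneOn ⟨hx, by linarith⟩ ⟨by linarith, hy₃⟩ hxy
  · calc sin x ^ 2 / x ≤ sin (π / 4) ^ 2 / (π / 4) :=
          sin_sq_div_self_monotoneOn ⟨hx, by linarith⟩ ⟨by positivity, by linarith⟩ hx₄
      _ = 2 / π := sin_sq_div_self_pi_div_four
      _ ≤ sin y ^ 2 / y := two_div_pi_le_sin_sq_div_self (by linarith) hy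

lemma sin_sq_div_self_pi_div_two_mul {q : ℝ} (hq : q ≠ 0) :
    sin (π / (2 * q)) ^ 2 / (π / (2 * q)) = 2 / π * (q * sin (π / (2 * q)) ^ 2) := by
  field_simp [pi_ne_zero]

end Real

theorem stmt_16 (p : ℝ) (hp : 2 ≤ p) :
    Real.sin (π / (2 * p)) / Real.sin (π / (2 * (p - 1))) ≤ ((p - 1) / p) ^ ((1 : ℝ) / 2) := by
  have hπ : 0 < π := pi_pos
  have hp₀ : 0 < p := by linarith
  have hp₁ : 0 < p - 1 := by linarith
  set x := π / (2 * p)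
  set y := π / (2 * (p - 1))
  have hsx : 0 < sin x := sin_pos_of_pos_of_lt_pi (by positivity) (by
    rw [div_lt_iff₀ (by positivity)]; nlinarith)
  have hsy : 0 < sin y := sin_pos_of_pos_of_lt_pi (by positivity) (by
    rw [div_lt_iff₀ (by positivity)]; nlinarith)
  have hf : sin x ^ 2 / x ≤ sin y ^ 2 / y :=
    sin_sq_div_self_le (by positivity)
      (div_le_div_of_nonneg_left hπ.le (by positivity) (by linarith))
      (div_le_div_of_nonneg_left hπ.le (by norm_num) (by linarith))
      (div_le_div_of_nonneg_left hπ.le (by norm_num) (by linarith))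
  rw [sin_sq_div_self_pi_div_two_mul hp₀.ne', sin_sq_div_self_pi_div_two_mul hp₁.ne',
    mul_le_mul_iff_right₀ (by positivity)] at hf
  rw [← sqrt_eq_rpow, le_sqrt (by positivity) (by positivity), div_pow,
    div_le_div_iff₀ (by positivity) hp₀]
  linarith
end

section
/- For every real p ≥ 2, one has cos(π/(2p))^{p−1} ≥ 2^{−1/2}. -/
/-! The function `x ↦ -log (cos x) / x ^ 2` is increasing on `(0, π/2)`: its derivative is
`(x * tan x + 2 * log (cos x)) / x ^ 3`, and the numerator vanishes at `0` and has derivative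
`(x - sin x * cos x) / cos x ^ 2 ≥ 0`. Comparing `x = π / (2p) ≤ π / 4` with `π / 4` gives
`-log (cos x) ≤ (8 log 2 / π²) x² = 2 log 2 / p²` (an equality at `p = 2`), and
`(p - 1) * 2 log 2 / p² ≤ log 2 / 2` because `(p - 2)² ≥ 0`. -/

open Real Set

lemma sin_mul_cos_le_self {x : ℝ} (hx : 0 ≤ x) : sin x * cos x ≤ x := by
  have h := sin_le (by linarith : 0 ≤ 2 * x)
  rw [sin_two_mul] at h
  linarith

lemma cos_pos_of_mem_Ico {x : ℝ} (hx : x ∈ Ico 0 (π / 2)) : 0 < cos x :=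
  cos_pos_of_mem_Ioo ⟨by linarith [hx.1, pi_pos], hx.2⟩

lemma hasDerivAt_mul_tan_add_two_mul_log_cos {x : ℝ} (hx : cos x ≠ 0) :
    HasDerivAt (fun y => y * tan y + 2 * log (cos y)) ((x - sin x * cos x) / cos x ^ 2) x := by
  refine (((hasDerivAt_id' x).mul (hasDerivAt_tan hx)).add
    (((hasDerivAt_cos x).log hx).const_mul 2)).congr_deriv ?_
  rw [tan_eq_sin_div_cos]
  field_simp
  ring

lemma mul_tan_add_two_mul_log_cos_nonneg {x : ℝ} (hx : x ∈ Ico 0 (π / 2)) :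
    0 ≤ x * tan x + 2 * log (cos x) := by
  have hmono : MonotoneOn (fun y => y * tan y + 2 * log (cos y)) (Ico 0 (π / 2)) := by
    refine monotoneOn_of_hasDerivWithinAt_nonneg (convex_Ico _ _)
      (f' := fun y => (y - sin y * cos y) / cos y ^ 2) (fun y hy => ?_) ?_ ?_
    · exact (hasDerivAt_mul_tan_add_two_mul_log_cos
        (cos_pos_of_mem_Ico hy).ne').continuousAt.continuousWithinAt
    · rw [interior_Ico]
      exact fun y hy => (hasDerivAt_mul_tan_add_two_mul_log_cos
        (cos_pos_of_mem_Ico (Ioo_subset_Ico_self hy)).ne').hasDerivWithinAt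
    · rw [interior_Ico]
      exact fun y hy => div_nonneg (sub_nonneg.2 (sin_mul_cos_le_self hy.1.le)) (sq_nonneg _)
  simpa using hmono ⟨le_rfl, by positivity⟩ hx hx.1

lemma hasDerivAt_neg_log_cos_div_sq {x : ℝ} (hx : x ≠ 0) (hcos : cos x ≠ 0) :
    HasDerivAt (fun y => -log (cos y) / y ^ 2) ((x * tan x + 2 * log (cos x)) / x ^ 3) x := by
  refine ((((hasDerivAt_cos x).log hcos).neg).div
    (hasDerivAt_pow 2 x) (pow_ne_zero 2 hx)).congr_deriv ?_
  rw [Pi.neg_apply, tan_eq_sin_div_cos]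
  field_simp
  ring

lemma monotoneOn_neg_log_cos_div_sq :
    MonotoneOn (fun x => -log (cos x) / x ^ 2) (Ioo 0 (π / 2)) := by
  have hderiv : ∀ x ∈ Ioo 0 (π / 2), HasDerivAt (fun y => -log (cos y) / y ^ 2)
      ((x * tan x + 2 * log (cos x)) / x ^ 3) x := fun x hx =>
    hasDerivAt_neg_log_cos_div_sq hx.1.ne' (cos_pos_of_mem_Ico (Ioo_subset_Ico_self hx)).ne'
  refine monotoneOn_of_hasDerivWithinAt_nonneg (convex_Ioo _ _)
    (f' := fun x => (x * tan x + 2 * log (cos x)) / x ^ 3)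
    (fun x hx => (hderiv x hx).continuousAt.continuousWithinAt) ?_ ?_ <;> rw [interior_Ioo]
  · exact fun x hx => (hderiv x hx).hasDerivWithinAt
  · exact fun x hx => div_nonneg
      (mul_tan_add_two_mul_log_cos_nonneg (Ioo_subset_Ico_self hx)) (pow_nonneg hx.1.le 3)

lemma log_cos_pi_div_four : log (cos (π / 4)) = -(log 2 / 2) := by
  rw [cos_pi_div_four, log_div (by positivity) two_ne_zero, log_sqrt zero_le_two]
  ring

lemma neg_log_cos_le_of_le_pi_div_four {x : ℝ} (hx₀ : 0 < x) (hx : x ≤ π / 4) :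
    -log (cos x) ≤ 8 * log 2 / π ^ 2 * x ^ 2 := by
  have hπ := pi_pos
  have h := monotoneOn_neg_log_cos_div_sq ⟨hx₀, by linarith⟩ ⟨by positivity, by linarith⟩ hx
  simp only at h
  rw [log_cos_pi_div_four, div_le_iff₀ (by positivity)] at h
  refine h.trans_eq ?_
  field_simp
  ring

theorem stmt_17 (p : ℝ) (hp : 2 ≤ p) :
    Real.cos (π / (2 * p)) ^ (p - 1) ≥ (2 : ℝ) ^ (-(1 : ℝ) / 2) := by
  have hπ := pi_pos
  have hp₀ : 0 < p := by linarith
  have hx : π / (2 * p) ≤ π / 4 := div_le_div_of_nonneg_left hπ.le (by norm_num) (by linarith)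
  have hcos : 0 < cos (π / (2 * p)) := cos_pos_of_mem_Ico ⟨by positivity, by linarith⟩
  have hlog : -log (cos (π / (2 * p))) ≤ 2 * log 2 / p ^ 2 := by
    refine (neg_log_cos_le_of_le_pi_div_four (by positivity) hx).trans_eq ?_
    field_simp
    ring
  have hratio : (p - 1) * (2 * log 2 / p ^ 2) ≤ log 2 / 2 := by
    rw [← mul_div_assoc, div_le_div_iff₀ (by positivity) two_pos]
    nlinarith [sq_nonneg (p - 2), log_nonneg one_le_two]
  rw [ge_iff_le, rpow_def_of_pos two_pos, rpow_def_of_pos hcos, exp_le_exp]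
  linarith [mul_le_mul_of_nonneg_left hlog (by linarith : (0 : ℝ) ≤ p - 1)]
end
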